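/- arXiv:2003.01980 — 9 statements merged into one kernel-verified Lean document; each statement's English description precedes it below -/
import Mathlib

section
/- Let α > 0 and 1 ≤ J ≤ N-1. The minimum of m^J(x) over all x ∈ ℝ^N satisfying x^i - x^{i-1} ≥ α for all i = 2,...,N equals αN/2. Moreover, m^J(x) = αN/2 if and only if x^i - x^{i-1} = α for all i = 2,...,N. -/
/-!
Write `x i = α * i + y i`. Since `m^J` is linear and `m^J (α * i) = α N / 2`, it suffices that
`m^J y ≥ 0` when `y` is nondecreasing on `[1, N]`, with equality only if `y` is constant there.
Both hold because the mean of `y` over `[J + 1, N]` is at least `y J`, which is at least its mean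
over `[1, J]`; and a mean equals a bound of its terms only if all terms equal that bound.
-/

open Finset
open scoped BigOperators

namespace Finset

variable {ι β : Type*} [AddCommMonoid β] [PartialOrder β] [IsOrderedCancelAddMonoid β]
  [Module ℚ≥0 β] [PosSMulStrictMono ℚ≥0 β] {s : Finset ι} {f : ι → β} {a : β}

lemma eq_of_forall_le_of_expect_eq (hle : ∀ i ∈ s, f i ≤ a) (h : 𝔼 i ∈ s, f i = a) :
    ∀ i ∈ s, f i = a := by
  by_contra! hne
  obtain ⟨i, hi, hfi⟩ := hne
  exact (expect_lt hle ⟨i, hi, (hle i hi).lt_of_ne hfi⟩).ne h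

lemma eq_of_forall_ge_of_expect_eq (hge : ∀ i ∈ s, a ≤ f i) (h : 𝔼 i ∈ s, f i = a) :
    ∀ i ∈ s, f i = a := by
  by_contra! hne
  obtain ⟨i, hi, hfi⟩ := hne
  exact (lt_expect hge ⟨i, hi, (hge i hi).lt_of_ne hfi.symm⟩).ne' h

end Finset

lemma sum_Icc_natCast_mul_two {a b : ℕ} (hab : a ≤ b) :
    (∑ i ∈ Icc a b, (i : ℝ)) * 2 = ((b : ℝ) + 1 - a) * (a + b) := by
  induction b, hab using Nat.le_induction with
  | base => simp only [Icc_self, sum_singleton]; ring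
  | succ b hab ih =>
    rw [sum_Icc_succ_top (by omega), add_mul, ih]
    push_cast
    ring

lemma expect_Icc_natCast {a b : ℕ} (hab : a ≤ b) : 𝔼 i ∈ Icc a b, (i : ℝ) = (a + b) / 2 := by
  have hcard : ((#(Icc a b) : ℕ) : ℝ) = b + 1 - a := by
    rw [Nat.card_Icc, Nat.cast_sub (by omega)]
    push_cast
    ring
  have hpos : (b : ℝ) + 1 - a ≠ 0 := by
    have : (a : ℝ) ≤ b := by exact_mod_cast hab
    linarith
  rw [expect_eq_sum_div_card, hcard, div_eq_div_iff hpos two_ne_zero, sum_Icc_natCast_mul_two hab]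
  ring

lemma monotoneOn_sub_mul_of_le_sub_pred {x : ℕ → ℝ} {α : ℝ} {N : ℕ}
    (hx : ∀ i ∈ Icc 2 N, α ≤ x i - x (i - 1)) :
    MonotoneOn (fun i : ℕ => x i - α * i) (Set.Icc 1 N) := by
  refine monotoneOn_of_le_add_one Set.ordConnected_Icc fun i _ hi hi' => ?_
  have h := hx (i + 1) (by simp only [Set.mem_Icc, mem_Icc] at hi hi' ⊢; omega)
  simp only [Nat.add_sub_cancel] at h
  push_cast
  linarith

/-- The paper's `m^J`. -/
noncomputable def gapMean (J N : ℕ) (x : ℕ → ℝ) : ℝ :=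
  (1 / ((N : ℝ) - J)) * ∑ i ∈ Icc (J + 1) N, x i - (1 / (J : ℝ)) * ∑ i ∈ Icc 1 J, x i

section gapMean

variable {J N : ℕ}

lemma gapMean_eq_expect_sub_expect (x : ℕ → ℝ) :
    gapMean J N x = 𝔼 i ∈ Icc (J + 1) N, x i - 𝔼 i ∈ Icc 1 J, x i := by
  rcases le_or_gt J N with hJN | hNJ
  · simp only [gapMean, expect_eq_sum_div_card, Nat.card_Icc, Nat.add_sub_cancel,
      Nat.reduceSubDiff, Nat.cast_sub hJN]
    ring
  · simp [gapMean, expect_eq_sum_div_card, Icc_eq_empty_of_lt (Nat.lt_succ_of_lt hNJ),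
      div_eq_inv_mul]

lemma gapMean_add (x y : ℕ → ℝ) :
    gapMean J N (fun i => x i + y i) = gapMean J N x + gapMean J N y := by
  simp only [gapMean, sum_add_distrib]
  ring

lemma gapMean_neg (x : ℕ → ℝ) : gapMean J N (fun i => -x i) = -gapMean J N x := by
  simp only [gapMean, sum_neg_distrib]
  ring

variable (hJ : 1 ≤ J) (hJN : J < N)
include hJ hJN

lemma gapMean_mul_natCast (α : ℝ) : gapMean J N (fun i => α * i) = α * N / 2 := by
  rw [gapMean_eq_expect_sub_expect, ← mul_expect, ← mul_expect, expect_Icc_natCast (by omega),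
    expect_Icc_natCast hJ]
  push_cast
  ring

section Monotone

variable {y : ℕ → ℝ} (hy : MonotoneOn y (Set.Icc 1 N))
include hy

lemma le_of_mem_Icc_one_of_monotoneOn : ∀ i ∈ Icc 1 J, y i ≤ y J := fun i hi => by
  rw [mem_Icc] at hi
  exact hy ⟨hi.1, by omega⟩ ⟨hJ, hJN.le⟩ hi.2

lemma ge_of_mem_Icc_succ_of_monotoneOn : ∀ i ∈ Icc (J + 1) N, y J ≤ y i := fun i hi => by
  rw [mem_Icc] at hi
  exact hy ⟨hJ, hJN.le⟩ ⟨by omega, hi.2⟩ (by omega)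

lemma expect_Icc_one_le_of_monotoneOn : 𝔼 i ∈ Icc 1 J, y i ≤ y J :=
  expect_le (nonempty_Icc.2 hJ) (le_of_mem_Icc_one_of_monotoneOn hJ hJN hy)

lemma le_expect_Icc_succ_of_monotoneOn : y J ≤ 𝔼 i ∈ Icc (J + 1) N, y i :=
  le_expect (nonempty_Icc.2 hJN) (ge_of_mem_Icc_succ_of_monotoneOn hJ hJN hy)

lemma gapMean_nonneg_of_monotoneOn : 0 ≤ gapMean J N y := by
  rw [gapMean_eq_expect_sub_expect]
  linarith [expect_Icc_one_le_of_monotoneOn hJ hJN hy, le_expect_Icc_succ_of_monotoneOn hJ hJN hy]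

lemma eqOn_of_monotoneOn_of_gapMean_eq_zero (h : gapMean J N y = 0) :
    ∀ i ∈ Set.Icc 1 N, y i = y J := by
  have hlower := expect_Icc_one_le_of_monotoneOn hJ hJN hy
  have hupper := le_expect_Icc_succ_of_monotoneOn hJ hJN hy
  rw [gapMean_eq_expect_sub_expect] at h
  rintro i ⟨hi1, hiN⟩
  rcases le_or_gt i J with hiJ | hJi
  · exact eq_of_forall_le_of_expect_eq (le_of_mem_Icc_one_of_monotoneOn hJ hJN hy)
      (by linarith) i (mem_Icc.2 ⟨hi1, hiJ⟩)
  · exact eq_of_forall_ge_of_expect_eq (ge_of_mem_Icc_succ_of_monotoneOn hJ hJN hy)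
      (by linarith) i (mem_Icc.2 ⟨hJi, hiN⟩)

end Monotone

lemma gapMean_eq_add_gapMean_sub (x : ℕ → ℝ) (α : ℝ) :
    gapMean J N x = α * N / 2 + gapMean J N (fun i => x i - α * i) := by
  rw [← gapMean_mul_natCast hJ hJN α, ← gapMean_add]
  congr 1
  ext i
  ring

variable {x : ℕ → ℝ} {α : ℝ} (hx : ∀ i ∈ Icc 2 N, α ≤ x i - x (i - 1))
include hx

lemma le_gapMean : α * N / 2 ≤ gapMean J N x := by
  rw [gapMean_eq_add_gapMean_sub hJ hJN x α]
  linarith [gapMean_nonneg_of_monotoneOn hJ hJN (monotoneOn_sub_mul_of_le_sub_pred hx)]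

lemma gapMean_eq_iff : gapMean J N x = α * N / 2 ↔ ∀ i ∈ Icc 2 N, x i - x (i - 1) = α := by
  constructor
  · intro h i hi
    rw [gapMean_eq_add_gapMean_sub hJ hJN x α] at h
    have hconst := eqOn_of_monotoneOn_of_gapMean_eq_zero hJ hJN
      (monotoneOn_sub_mul_of_le_sub_pred hx) (by linarith)
    rw [mem_Icc] at hi
    have hi' := hconst i ⟨by omega, hi.2⟩
    have hpred := hconst (i - 1) ⟨by omega, by omega⟩
    rw [Nat.cast_sub (by omega : 1 ≤ i)] at hpred
    push_cast at hi' hpred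
    linarith
  · intro h
    -- the reverse inequality is the lower bound for `-x` with steps at least `-α`
    have hneg := le_gapMean hJ hJN (x := fun i => -x i) (α := -α) fun i hi => by linarith [h i hi]
    rw [gapMean_neg] at hneg
    linarith [le_gapMean hJ hJN hx]

end gapMean

theorem stmt_3_general (N : ℕ) (α : ℝ)
    (J : ℕ) (hJ1 : 1 ≤ J) (hJ : J ≤ N - 1) :
    IsLeast { y : ℝ | ∃ x : ℕ → ℝ,
        (∀ i ∈ Finset.Icc 2 N, α ≤ x i - x (i - 1)) ∧
        y = (1 / ((N : ℝ) - J)) * ∑ i ∈ Finset.Icc (J + 1) N, x i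
            - (1 / (J : ℝ)) * ∑ i ∈ Finset.Icc 1 J, x i }
      (α * N / 2)
    ∧ ∀ x : ℕ → ℝ, (∀ i ∈ Finset.Icc 2 N, α ≤ x i - x (i - 1)) →
        ((1 / ((N : ℝ) - J)) * ∑ i ∈ Finset.Icc (J + 1) N, x i
            - (1 / (J : ℝ)) * ∑ i ∈ Finset.Icc 1 J, x i = α * N / 2
          ↔ ∀ i ∈ Finset.Icc 2 N, x i - x (i - 1) = α) := by
  have hJN : J < N := by omega
  have hlinear : ∀ i ∈ Icc 2 N, α ≤ α * i - α * ((i - 1 : ℕ) : ℝ) := fun i hi => by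
    rw [Nat.cast_sub (by simp only [mem_Icc] at hi; omega)]
    push_cast
    linarith
  refine ⟨⟨⟨fun i => α * i, hlinear, (gapMean_mul_natCast hJ1 hJN α).symm⟩, ?_⟩,
    fun x hx => gapMean_eq_iff hJ1 hJN hx⟩
  rintro _ ⟨x, hx, rfl⟩
  exact le_gapMean hJ1 hJN hx

theorem stmt_3 (N : ℕ) (hN : 2 ≤ N) (α : ℝ) (hα : 0 < α)
    (J : ℕ) (hJ1 : 1 ≤ J) (hJ : J ≤ N - 1) :
    IsLeast { y : ℝ | ∃ x : ℕ → ℝ,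
        (∀ i ∈ Finset.Icc 2 N, α ≤ x i - x (i - 1)) ∧
        y = (1 / ((N : ℝ) - J)) * ∑ i ∈ Finset.Icc (J + 1) N, x i
            - (1 / (J : ℝ)) * ∑ i ∈ Finset.Icc 1 J, x i }
      (α * N / 2)
    ∧ ∀ x : ℕ → ℝ, (∀ i ∈ Finset.Icc 2 N, α ≤ x i - x (i - 1)) →
        ((1 / ((N : ℝ) - J)) * ∑ i ∈ Finset.Icc (J + 1) N, x i
            - (1 / (J : ℝ)) * ∑ i ∈ Finset.Icc 1 J, x i = α * N / 2
          ↔ ∀ i ∈ Finset.Icc 2 N, x i - x (i - 1) = α) :=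
  stmt_3_general N α J hJ1 hJ
end

section
/- Let x^1 < x^2 < ... < x^N be real numbers with |x^i - x^j| ≥ c/N for all i ≠ j (some c > 0 independent of N). If the empirical measures m^N = (1/N) Σ_i δ_{x^i} converge narrowly to a probability measure μ as N → ∞, then μ is absolutely continuous with respect to Lebesgue measure with density bounded by 2/c. -/
/-!
Points at mutual distance at least `c / N` have disjoint neighbourhoods of length `c / N`, so at
most `N (b - a) / c + 1` of them lie in `(a, b)`: the empirical measures satisfy
`m^N (a, b) ≤ (b - a) / c + 1 / N`. Open intervals are open sets, so by the portmanteau theorem the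
bound `μ (a, b) ≤ (b - a) / c` passes to the narrow limit. It extends to closed intervals, i.e. to
closed balls, and the Besicovitch covering theorem then gives `μ ≤ c⁻¹ • volume`; hence `μ` has a
density bounded by `1 / c`.
-/

open MeasureTheory Filter
open scoped ENNReal

section

open Set Metric Topology Finset
open scoped NNReal

lemma card_mul_le_of_le_abs_sub {ι : Type*} (S : Finset ι) {x : ι → ℝ} {δ a b : ℝ} (hδ : 0 < δ)
    (hab : a ≤ b) (hx : ∀ i ∈ S, x i ∈ Icc a b)
    (hsep : ∀ i ∈ S, ∀ j ∈ S, i ≠ j → δ ≤ |x i - x j|) :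
    #S * δ ≤ b - a + δ := by
  set r := δ / 2 with hr
  have hdisj : (S : Set ι).PairwiseDisjoint fun i => Ioo (x i - r) (x i + r) := by
    intro i hi j hj hij
    rcases le_abs'.1 (hsep i hi j hj hij) with h | h
    · exact Ioo_disjoint_Ioo.2 (min_le_of_left_le (le_max_of_le_right (by linarith)))
    · exact Ioo_disjoint_Ioo.2 (min_le_of_right_le (le_max_of_le_left (by linarith)))
  have hsub : (⋃ i ∈ S, Ioo (x i - r) (x i + r)) ⊆ Ioo (a - r) (b + r) := by
    refine iUnion₂_subset fun i hi => Ioo_subset_Ioo ?_ ?_ <;> linarith [(hx i hi).1, (hx i hi).2]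
  have hvol : ENNReal.ofReal (#S * δ) ≤ ENNReal.ofReal (b - a + δ) :=
    calc ENNReal.ofReal (#S * δ) = ∑ i ∈ S, volume (Ioo (x i - r) (x i + r)) := by
          simp [Real.volume_Ioo, hr, ENNReal.ofReal_mul]
      _ = volume (⋃ i ∈ S, Ioo (x i - r) (x i + r)) :=
          (measure_biUnion_finset hdisj fun _ _ => measurableSet_Ioo).symm
      _ ≤ volume (Ioo (a - r) (b + r)) := measure_mono hsub
      _ = ENNReal.ofReal (b - a + δ) := by rw [Real.volume_Ioo, hr]; ring_nf
  exact (ENNReal.ofReal_le_ofReal_iff (by linarith)).1 hvol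

namespace MeasureTheory

section Empirical

variable {α : Type*} [MeasurableSpace α] {N : ℕ}

noncomputable def empiricalMeasure (x : Fin N → α) : Measure α :=
  (N : ℝ≥0∞)⁻¹ • ∑ i, Measure.dirac (x i)

lemma empiricalMeasure_apply (x : Fin N → α) {s : Set α} [DecidablePred (· ∈ s)]
    (hs : MeasurableSet s) :
    empiricalMeasure x s = (N : ℝ≥0∞)⁻¹ * #{i | x i ∈ s} := by
  rw [empiricalMeasure, Measure.smul_apply, Measure.finsetSum_apply, smul_eq_mul,
    Finset.card_eq_sum_ones, Nat.cast_sum, Finset.sum_filter]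
  simp [Measure.dirac_apply' _ hs, Set.indicator_apply]

instance isProbabilityMeasure_empiricalMeasure [NeZero N] (x : Fin N → α) : IsProbabilityMeasure (empiricalMeasure x) := by
  constructor
  simp [empiricalMeasure_apply x MeasurableSet.univ, ENNReal.inv_mul_cancel, NeZero.ne N]

lemma integral_empiricalMeasure [MeasurableSingletonClass α] {E : Type*} [NormedAddCommGroup E]
    [NormedSpace ℝ E] [CompleteSpace E] (x : Fin N → α) (g : α → E) :
    ∫ y, g y ∂empiricalMeasure x = (N : ℝ)⁻¹ • ∑ i, g (x i) := by
  rw [empiricalMeasure, integral_smul_measure,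
    integral_finsetSum_measure fun i _ => integrable_dirac enorm_lt_top]
  simp [ENNReal.toReal_inv]

noncomputable def empiricalProbabilityMeasure [NeZero N] (x : Fin N → α) : ProbabilityMeasure α :=
  ⟨empiricalMeasure x, inferInstance⟩

end Empirical

lemma empiricalMeasure_Ioo_le {N : ℕ} [NeZero N] {x : Fin N → ℝ} {c : ℝ} (hc : 0 < c)
    (hsep : ∀ i j, i ≠ j → c / N ≤ |x i - x j|) (a b : ℝ) :
    empiricalMeasure x (Ioo a b) ≤ ENNReal.ofReal ((b - a) / c + 1 / N) := by
  rcases le_or_gt b a with hba | hab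
  · simp [Ioo_eq_empty_of_le hba]
  have hN : (0 : ℝ) < N := Nat.cast_pos.2 (Nat.pos_of_neZero N)
  have hcard := card_mul_le_of_le_abs_sub {i | x i ∈ Ioo a b} (by positivity) hab.le
    (fun i hi => Set.Ioo_subset_Icc_self (Finset.mem_filter.1 hi).2) fun i _ j _ => hsep i j
  rw [empiricalMeasure_apply x measurableSet_Ioo, ← ENNReal.ofReal_natCast N,
    ← ENNReal.ofReal_inv_of_pos hN, ← ENNReal.ofReal_natCast, ← ENNReal.ofReal_mul (by positivity)]
  refine ENNReal.ofReal_le_ofReal ?_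
  rw [inv_mul_le_iff₀ hN]
  calc _ ≤ (b - a + c / N) / (c / N) := (le_div_iff₀ (by positivity)).2 hcard
    _ = N * ((b - a) / c + 1 / N) := by field_simp

lemma tendsto_empiricalProbabilityMeasure_of_tendsto_integral {α : Type*} [TopologicalSpace α]
    [MeasurableSpace α] [OpensMeasurableSpace α] [MeasurableSingletonClass α]
    {x : (N : ℕ) → Fin N → α} {μ : ProbabilityMeasure α}
    (h : ∀ g : BoundedContinuousFunction α ℝ,
      Tendsto (fun N : ℕ => (1 / (N : ℝ)) * ∑ i, g (x N i)) atTop (𝓝 (∫ y, g y ∂μ))) :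
    Tendsto (fun n => empiricalProbabilityMeasure (x (n + 1))) atTop (𝓝 μ) := by
  refine ProbabilityMeasure.tendsto_iff_forall_integral_tendsto.2 fun g => ?_
  simpa [Function.comp_def, empiricalProbabilityMeasure, integral_empiricalMeasure] using
    (h g).comp (tendsto_add_atTop_nat 1)

lemma measure_Ioo_le_of_tendsto_empiricalProbabilityMeasure {c : ℝ} (hc : 0 < c)
    {x : (N : ℕ) → Fin N → ℝ} (hsep : ∀ N, ∀ i j : Fin N, i ≠ j → c / N ≤ |x N i - x N j|)
    {μ : ProbabilityMeasure ℝ}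
    (hμ : Tendsto (fun n => empiricalProbabilityMeasure (x (n + 1))) atTop (𝓝 μ)) (a b : ℝ) :
    (μ : Measure ℝ) (Ioo a b) ≤ ENNReal.ofReal c⁻¹ * volume (Ioo a b) := by
  have hbound : Tendsto (fun n : ℕ => ENNReal.ofReal ((b - a) / c + 1 / ((n + 1 : ℕ) : ℝ)))
      atTop (𝓝 (ENNReal.ofReal (c⁻¹ * (b - a)))) := by
    refine ENNReal.tendsto_ofReal ?_
    simpa [div_eq_inv_mul] using tendsto_one_div_add_atTop_nhds_zero_nat.const_add ((b - a) / c)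
  calc (μ : Measure ℝ) (Ioo a b)
      ≤ atTop.liminf fun n => empiricalMeasure (x (n + 1)) (Ioo a b) :=
        ProbabilityMeasure.le_liminf_measure_open_of_tendsto hμ isOpen_Ioo
    _ ≤ atTop.liminf fun n : ℕ => ENNReal.ofReal ((b - a) / c + 1 / ((n + 1 : ℕ) : ℝ)) :=
        liminf_le_liminf (Eventually.of_forall fun n =>
          empiricalMeasure_Ioo_le hc (hsep (n + 1)) a b)
    _ = ENNReal.ofReal (c⁻¹ * (b - a)) := hbound.liminf_eq
    _ = ENNReal.ofReal c⁻¹ * volume (Ioo a b) := by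
        rw [Real.volume_Ioo, ENNReal.ofReal_mul (by positivity)]

lemma Measure.le_of_forall_measure_closedBall_le {α : Type*} [MetricSpace α]
    [SecondCountableTopology α] [MeasurableSpace α] [BorelSpace α] [HasBesicovitchCovering α]
    {μ ν : Measure α} [SFinite μ] [IsLocallyFiniteMeasure ν]
    (h : ∀ y, ∀ r > 0, μ (closedBall y r) ≤ ν (closedBall y r)) : μ ≤ ν :=
  Measure.le_iff'.2 fun s =>
    (Besicovitch.vitaliFamily μ).measure_le_of_frequently_le ν
      Measure.AbsolutelyContinuous.rfl s fun y _ =>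
        (Besicovitch.tendsto_filterAt μ y).frequently
          (eventually_nhdsWithin_of_forall (s := Ioi 0) fun r hr => h y r hr).frequently

lemma measure_Icc_le_of_forall_measure_Ioo_le {μ : Measure ℝ} {K : ℝ≥0∞} (hK : K ≠ ∞)
    (h : ∀ a b, μ (Ioo a b) ≤ K * volume (Ioo a b)) (a b : ℝ) :
    μ (Icc a b) ≤ K * volume (Icc a b) := by
  have hlim : Tendsto (fun ε => K * ENNReal.ofReal (b + ε - (a - ε))) (𝓝[>] 0)
      (𝓝 (K * volume (Icc a b))) := by
    rw [Real.volume_Icc]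
    refine ENNReal.Tendsto.const_mul (ENNReal.tendsto_ofReal ?_) (Or.inr hK)
    exact tendsto_nhdsWithin_of_tendsto_nhds <|
      (by fun_prop : Continuous fun ε : ℝ => b + ε - (a - ε)).tendsto' 0 _ (by ring)
  refine ge_of_tendsto hlim (eventually_nhdsWithin_of_forall fun ε (hε : 0 < ε) => ?_)
  calc μ (Icc a b) ≤ μ (Ioo (a - ε) (b + ε)) :=
        measure_mono (Icc_subset_Ioo (by linarith) (by linarith))
    _ ≤ K * ENNReal.ofReal (b + ε - (a - ε)) := by rw [← Real.volume_Ioo]; exact h _ _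

lemma le_smul_volume_of_forall_measure_Ioo_le {μ : Measure ℝ} [SFinite μ] {K : ℝ≥0}
    (h : ∀ a b, μ (Ioo a b) ≤ K * volume (Ioo a b)) : μ ≤ (K : ℝ≥0∞) • volume := by
  rw [Measure.coe_nnreal_smul]
  refine Measure.le_of_forall_measure_closedBall_le fun y r _ => ?_
  rw [← Measure.coe_nnreal_smul, Measure.smul_apply, smul_eq_mul, Real.closedBall_eq_Icc]
  exact measure_Icc_le_of_forall_measure_Ioo_le ENNReal.coe_ne_top h _ _

lemma Measure.rnDeriv_le_of_le_smul {α : Type*} [MeasurableSpace α] {μ ν : Measure α}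
    [SigmaFinite ν] {K : ℝ≥0∞} (h : μ ≤ K • ν) : μ.rnDeriv ν ≤ᵐ[ν] fun _ => K := by
  refine ae_le_of_forall_setLIntegral_le_of_sigmaFinite (μ.measurable_rnDeriv ν)
    fun s _ _ => ?_
  rw [setLIntegral_const]
  exact (Measure.setLIntegral_rnDeriv_le s).trans (h s)

end MeasureTheory

end

theorem stmt_5_general (c : ℝ) (hc : 0 < c)
    (x : (N : ℕ) → Fin N → ℝ)
    (hdist : ∀ N, ∀ i j : Fin N, i ≠ j → c / N ≤ |x N i - x N j|)
    (μ : Measure ℝ) [IsProbabilityMeasure μ]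
    (hconv : ∀ g : BoundedContinuousFunction ℝ ℝ,
      Tendsto (fun N : ℕ => (1 / (N : ℝ)) * ∑ i : Fin N, g (x N i)) atTop
        (nhds (∫ y, g y ∂μ))) :
    μ ≪ volume ∧ ∃ m : ℝ → ℝ≥0∞, μ = volume.withDensity m ∧
      ∀ᵐ y ∂volume, m y ≤ ENNReal.ofReal (2 / c) := by
  have hle : μ ≤ ENNReal.ofReal c⁻¹ • volume :=
    le_smul_volume_of_forall_measure_Ioo_le <|
      measure_Ioo_le_of_tendsto_empiricalProbabilityMeasure (μ := ⟨μ, inferInstance⟩) hc hdist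
        (tendsto_empiricalProbabilityMeasure_of_tendsto_integral hconv)
  have hac : μ ≪ volume := hle.absolutelyContinuous.trans Measure.smul_absolutelyContinuous
  refine ⟨hac, μ.rnDeriv volume, (Measure.withDensity_rnDeriv_eq μ volume hac).symm, ?_⟩
  filter_upwards [Measure.rnDeriv_le_of_le_smul hle] with y hy
  exact hy.trans (ENNReal.ofReal_le_ofReal (by rw [div_eq_mul_inv]; linarith [inv_pos.2 hc]))

theorem stmt_5 (c : ℝ) (hc : 0 < c)
    (x : (N : ℕ) → Fin N → ℝ)
    (hord : ∀ N, ∀ i j : Fin N, i < j → x N i < x N j)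
    (hdist : ∀ N, ∀ i j : Fin N, i ≠ j → c / N ≤ |x N i - x N j|)
    (μ : Measure ℝ) [IsProbabilityMeasure μ]
    (hconv : ∀ g : BoundedContinuousFunction ℝ ℝ,
      Tendsto (fun N : ℕ => (1 / (N : ℝ)) * ∑ i : Fin N, g (x N i)) atTop
        (nhds (∫ y, g y ∂μ))) :
    μ ≪ volume ∧ ∃ m : ℝ → ℝ≥0∞, μ = volume.withDensity m ∧
      ∀ᵐ y ∂volume, m y ≤ ENNReal.ofReal (2 / c) :=
  stmt_5_general c hc x hdist μ hconv
end

section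
/- Let x ∈ ℝ^N (in dimension d) satisfy |x^i - x^j| ≥ c N^{-1/d} for all i ≠ j, and suppose the empirical measures m^N_x converge narrowly to μ. Then for every Borel set A of finite Lebesgue measure, μ(A) ≤ (2^d/(c^d ω_d)) |A|; in particular μ has a density m with ‖m‖_∞ ≤ 2^d c^{-d} ω_d^{-1}. -/
/-! Points at mutual distance at least `c N^{-1/d}` are centres of disjoint balls of radius
`c N^{-1/d} / 2`, each of volume `c^d ω_d / (2^d N)`; so the fraction of the points lying in a set
`S` is at most `C = 2^d / (c^d ω_d)` times the volume of a slight thickening of `S`. Testing the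
narrow convergence against a continuous function squeezed between the indicators of a compact `K`
and of its `δ`-thickening gives `μ K ≤ C |K_δ|`, and `δ → 0` gives `μ K ≤ C |K|`. Inner regularity
extends this to all Borel sets, so `μ ≤ C • volume`, whose Radon–Nikodym density is bounded by `C`.
-/

open MeasureTheory Filter Metric Set
open scoped Finset ENNReal Topology

open scoped Classical in
theorem card_mul_measure_ball_le_measure_thickening {E ι : Type*} [NormedAddCommGroup E]
    [MeasurableSpace E] [BorelSpace E] (μ : Measure E) [μ.IsAddHaarMeasure] [Fintype ι]
    {y : ι → E} {ρ : ℝ} (hsep : Pairwise fun i j => 2 * ρ ≤ dist (y i) (y j)) (S : Set E) :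
    (#{i | y i ∈ S} : ℝ≥0∞) * μ (ball 0 ρ) ≤ μ (thickening ρ S) := by
  have hdisj : (({i | y i ∈ S} : Finset ι) : Set ι).PairwiseDisjoint (fun i => ball (y i) ρ) :=
    fun i _ j _ hij => ball_disjoint_ball (by linarith [hsep hij])
  calc (#{i | y i ∈ S} : ℝ≥0∞) * μ (ball 0 ρ)
      = ∑ i ∈ {i | y i ∈ S}, μ (ball (y i) ρ) := by
        simp [Measure.addHaar_ball_center]
    _ = μ (⋃ i ∈ ({i | y i ∈ S} : Finset ι), ball (y i) ρ) :=
        (measure_biUnion_finset hdisj fun _ _ => measurableSet_ball).symm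
    _ ≤ μ (thickening ρ S) :=
        measure_mono <| iUnion₂_subset fun i hi =>
          ball_subset_thickening (Finset.mem_filter.1 hi).2 ρ

open scoped Classical in
theorem measure_le_of_eventually_card_le {X : Type*} [MeasurableSpace X] [PseudoEMetricSpace X]
    [OpensMeasurableSpace X] (μ : Measure X) [IsFiniteMeasure μ] (x : (N : ℕ) → Fin N → X)
    (hconv : ∀ g : BoundedContinuousFunction X ℝ,
      Tendsto (fun N : ℕ => (1 / (N : ℝ)) * ∑ i : Fin N, g (x N i)) atTop (𝓝 (∫ y, g y ∂μ)))
    {K : Set X} (hK : IsClosed K) {δ : ℝ} (hδ : 0 < δ) {b : ℝ≥0∞}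
    (hb : ∀ᶠ N in atTop, (#{i | x N i ∈ thickening δ K} : ℝ≥0∞) ≤ N * b) :
    μ K ≤ b := by
  rcases eq_or_ne b ∞ with rfl | hbtop
  · exact le_top
  let G : BoundedContinuousFunction X ℝ :=
    BoundedContinuousFunction.comp _ isometry_subtype_coe.lipschitz (thickenedIndicator hδ K)
  have hG : ∀ z, G z = thickenedIndicator hδ K z := fun _ => rfl
  have hsum : ∀ N, ∑ i : Fin N, G (x N i) ≤ #{i | x N i ∈ thickening δ K} := by
    intro N
    rw [Finset.card_filter, Nat.cast_sum]
    refine Finset.sum_le_sum fun i _ => ?_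
    split_ifs with hi
    · exact_mod_cast thickenedIndicator_le_one hδ K (x N i)
    · simp [hG, thickenedIndicator_zero hδ K hi]
  have havg : ∀ᶠ N : ℕ in atTop, (1 / (N : ℝ)) * ∑ i : Fin N, G (x N i) ≤ b.toReal := by
    filter_upwards [hb] with N hN
    rcases N.eq_zero_or_pos with rfl | hNpos
    · simp
    have hcard : (#{i | x N i ∈ thickening δ K} : ℝ) ≤ (N : ℝ) * b.toReal := by
      simpa using ENNReal.toReal_mono (ENNReal.mul_ne_top (by simp) hbtop) hN
    rw [one_div_mul_eq_div, div_le_iff₀' (by exact_mod_cast hNpos)]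
    exact (hsum N).trans hcard
  calc μ K ≤ ∫⁻ z, thickenedIndicator hδ K z ∂μ :=
        measure_le_lintegral_thickenedIndicator μ hK.measurableSet hδ
    _ = ENNReal.ofReal (∫ z, G z ∂μ) :=
        lintegral_coe_eq_integral _ (BoundedContinuousFunction.integrable_of_nnreal μ _)
    _ ≤ ENNReal.ofReal b.toReal := ENNReal.ofReal_le_ofReal (le_of_tendsto (hconv G) havg)
    _ = b := ENNReal.ofReal_toReal hbtop

theorem measure_le_mul_of_forall_le_mul_cthickening {X : Type*} [PseudoEMetricSpace X]
    [MeasurableSpace X] [OpensMeasurableSpace X] {μ ν : Measure X} {K : Set X} (hK : IsClosed K)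
    (hfin : ∃ R > 0, ν (cthickening R K) ≠ ∞) {a : ℝ≥0∞} (ha : a ≠ ∞)
    (h : ∀ δ > 0, μ K ≤ a * ν (cthickening δ K)) : μ K ≤ a * ν K :=
  ge_of_tendsto (ENNReal.Tendsto.const_mul
    ((tendsto_measure_cthickening_of_isClosed hfin hK).mono_left nhdsWithin_le_nhds) (Or.inr ha))
    (eventually_nhdsWithin_of_forall (s := Ioi 0) h)

theorem le_smul_of_forall_isCompact {X : Type*} [MeasurableSpace X] [TopologicalSpace X]
    {μ ν : Measure X} [μ.InnerRegular] {a : ℝ≥0∞} (h : ∀ K, IsCompact K → μ K ≤ a * ν K) :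
    μ ≤ a • ν := by
  refine Measure.le_iff.2 fun A hA => ?_
  rw [hA.measure_eq_iSup_isCompact]
  exact iSup₂_le fun K hKA => iSup_le fun hK => by
    rw [Measure.smul_apply, smul_eq_mul]
    exact (h K hK).trans (by gcongr)

theorem exists_withDensity_le_of_le_smul {X : Type*} [MeasurableSpace X] {μ ν : Measure X}
    [SigmaFinite μ] [SigmaFinite ν] {a : ℝ≥0∞} (h : μ ≤ a • ν) :
    ∃ m : X → ℝ≥0∞, μ = ν.withDensity m ∧ ∀ᵐ y ∂ν, m y ≤ a := by
  have hac : μ ≪ ν := fun s hs => le_antisymm (by simpa [hs] using h s) bot_le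
  refine ⟨μ.rnDeriv ν, (Measure.withDensity_rnDeriv_eq _ _ hac).symm, ?_⟩
  refine ae_le_of_forall_setLIntegral_le_of_sigmaFinite (Measure.measurable_rnDeriv _ _)
    fun s hs _ => ?_
  rw [Measure.setLIntegral_rnDeriv' hac hs, setLIntegral_const]
  simpa using h s

theorem tendsto_div_rpow_one_div_natCast_atTop {d : ℕ} (hd : d ≠ 0) (c : ℝ) :
    Tendsto (fun N : ℕ => c / (N : ℝ) ^ ((1 : ℝ) / d)) atTop (𝓝 0) :=
  ((tendsto_rpow_atTop (by positivity)).comp tendsto_natCast_atTop_atTop).const_div_atTop c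

theorem toReal_measure_ball_pos {E : Type*} [NormedAddCommGroup E] [NormedSpace ℝ E]
    [MeasurableSpace E] [BorelSpace E] [FiniteDimensional ℝ E] (μ : Measure E)
    [μ.IsAddHaarMeasure] (x : E) {r : ℝ} (hr : 0 < r) : 0 < (μ (ball x r)).toReal :=
  ENNReal.toReal_pos (measure_ball_pos _ _ hr).ne' measure_ball_lt_top.ne

theorem volume_ball_div_rpow_one_div {d : ℕ} (hd : d ≠ 0) {c : ℝ} (hc : 0 < c) {N : ℕ}
    (hN : N ≠ 0) :
    volume (ball (0 : EuclideanSpace ℝ (Fin d)) (c / (N : ℝ) ^ ((1 : ℝ) / d) / 2)) =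
      ((N : ℝ≥0∞) * ENNReal.ofReal
        (2 ^ d / (c ^ d * (volume (ball (0 : EuclideanSpace ℝ (Fin d)) 1)).toReal)))⁻¹ := by
  have hω := toReal_measure_ball_pos volume (0 : EuclideanSpace ℝ (Fin d)) one_pos
  have hNpos : (0 : ℝ) < N := by positivity
  have hpow : ((N : ℝ) ^ ((1 : ℝ) / d)) ^ d = N := by
    rw [one_div, Real.rpow_inv_natCast_pow hNpos.le hd]
  rw [Measure.addHaar_ball_of_pos _ _ (by positivity), finrank_euclideanSpace_fin]
  conv_lhs => rw [← ENNReal.ofReal_toReal measure_ball_lt_top.ne]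
  rw [← ENNReal.ofReal_mul (by positivity), ← ENNReal.ofReal_natCast, ← ENNReal.ofReal_mul hNpos.le,
    ← ENNReal.ofReal_inv_of_pos (mul_pos hNpos (div_pos (by positivity) (by positivity)))]
  congr 1
  rw [div_pow, div_pow, hpow]
  field_simp

open scoped Classical in
theorem card_le_of_separated {d : ℕ} (hd : d ≠ 0) {c : ℝ} (hc : 0 < c) {N : ℕ} (hN : N ≠ 0)
    {y : Fin N → EuclideanSpace ℝ (Fin d)}
    (hsep : ∀ i j : Fin N, i ≠ j → c / (N : ℝ) ^ ((1 : ℝ) / d) ≤ ‖y i - y j‖)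
    (S : Set (EuclideanSpace ℝ (Fin d))) :
    (#{i | y i ∈ S} : ℝ≥0∞) ≤ N * (ENNReal.ofReal
        (2 ^ d / (c ^ d * (volume (ball (0 : EuclideanSpace ℝ (Fin d)) 1)).toReal)) *
      volume (thickening (c / (N : ℝ) ^ ((1 : ℝ) / d) / 2) S)) := by
  have hpack := card_mul_measure_ball_le_measure_thickening volume
    (ρ := c / (N : ℝ) ^ ((1 : ℝ) / d) / 2) (y := y)
    (fun i j hij => by simp only [dist_eq_norm]; linarith [hsep i j hij]) S
  rw [volume_ball_div_rpow_one_div hd hc hN, ENNReal.mul_inv_le_iff] at hpack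
  · rwa [mul_comm, mul_assoc] at hpack
  · have := toReal_measure_ball_pos volume (0 : EuclideanSpace ℝ (Fin d)) one_pos
    exact mul_ne_zero (by simpa using hN) (by simp; positivity)
  · exact ENNReal.mul_ne_top (by simp) ENNReal.ofReal_ne_top

theorem measure_le_ofReal_mul_volume_of_isCompact {d : ℕ} (hd : d ≠ 0) {c : ℝ} (hc : 0 < c)
    {x : (N : ℕ) → Fin N → EuclideanSpace ℝ (Fin d)}
    (hdist : ∀ N, ∀ i j : Fin N, i ≠ j → c / (N : ℝ) ^ ((1 : ℝ) / d) ≤ ‖x N i - x N j‖)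
    (μ : Measure (EuclideanSpace ℝ (Fin d))) [IsFiniteMeasure μ]
    (hconv : ∀ g : BoundedContinuousFunction (EuclideanSpace ℝ (Fin d)) ℝ,
      Tendsto (fun N : ℕ => (1 / (N : ℝ)) * ∑ i : Fin N, g (x N i)) atTop (𝓝 (∫ y, g y ∂μ)))
    {K : Set (EuclideanSpace ℝ (Fin d))} (hK : IsCompact K) :
    μ K ≤ ENNReal.ofReal
      (2 ^ d / (c ^ d * (volume (ball (0 : EuclideanSpace ℝ (Fin d)) 1)).toReal)) * volume K := by
  refine measure_le_mul_of_forall_le_mul_cthickening hK.isClosed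
    ⟨1, one_pos, hK.isBounded.cthickening.measure_lt_top.ne⟩ ENNReal.ofReal_ne_top fun δ hδ => ?_
  refine measure_le_of_eventually_card_le μ x hconv hK.isClosed (half_pos hδ) ?_
  filter_upwards [eventually_ne_atTop 0, (tendsto_div_rpow_one_div_natCast_atTop hd c).eventually
    (eventually_le_nhds hδ)] with N hN hρ
  refine (card_le_of_separated hd hc hN (hdist N) _).trans ?_
  gcongr
  calc thickening (c / (N : ℝ) ^ ((1 : ℝ) / d) / 2) (thickening (δ / 2) K)
      ⊆ thickening (c / (N : ℝ) ^ ((1 : ℝ) / d) / 2 + δ / 2) K := thickening_thickening_subset _ _ _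
    _ ⊆ cthickening δ K :=
        (thickening_subset_cthickening _ _).trans (cthickening_mono (by linarith) _)

theorem stmt_6 (d : ℕ) (hd : 1 ≤ d) (c : ℝ) (hc : 0 < c)
    (x : (N : ℕ) → Fin N → EuclideanSpace ℝ (Fin d))
    (hdist : ∀ N, ∀ i j : Fin N, i ≠ j →
      c / (N : ℝ) ^ ((1 : ℝ) / d) ≤ ‖x N i - x N j‖)
    (μ : Measure (EuclideanSpace ℝ (Fin d))) [IsProbabilityMeasure μ]
    (hconv : ∀ g : BoundedContinuousFunction (EuclideanSpace ℝ (Fin d)) ℝ,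
      Tendsto (fun N : ℕ => (1 / (N : ℝ)) * ∑ i : Fin N, g (x N i)) atTop
        (nhds (∫ y, g y ∂μ)))
    (ωd : ℝ) (hωd : ωd = (volume (Metric.ball (0 : EuclideanSpace ℝ (Fin d)) 1)).toReal) :
    (∀ A : Set (EuclideanSpace ℝ (Fin d)), MeasurableSet A → volume A < ⊤ →
      (μ A).toReal ≤ (2 ^ d / (c ^ d * ωd)) * (volume A).toReal) ∧
    ∃ m : EuclideanSpace ℝ (Fin d) → ℝ≥0∞, μ = volume.withDensity m ∧
      ∀ᵐ y ∂volume, m y ≤ ENNReal.ofReal (2 ^ d / (c ^ d * ωd)) := by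
  subst hωd
  have hle : μ ≤ ENNReal.ofReal
      (2 ^ d / (c ^ d * (volume (ball (0 : EuclideanSpace ℝ (Fin d)) 1)).toReal)) • volume :=
    le_smul_of_forall_isCompact fun K hK =>
      measure_le_ofReal_mul_volume_of_isCompact (by omega) hc hdist μ hconv hK
  refine ⟨fun A _ hA => ?_, exists_withDensity_le_of_le_smul hle⟩
  have hpos := toReal_measure_ball_pos volume (0 : EuclideanSpace ℝ (Fin d)) one_pos
  rw [← ENNReal.toReal_ofReal (by positivity : (0 : ℝ) ≤ 2 ^ d / (c ^ d * _)), ← ENNReal.toReal_mul]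
  exact ENNReal.toReal_mono (ENNReal.mul_ne_top ENNReal.ofReal_ne_top hA.ne) (hle A)
end

section
/- Suppose x^1 ≤ x^2 ≤ ... ≤ x^N in ℝ satisfy x^{i+1} - x^i = c/N for all i, and the empirical measures m^N_x converge narrowly to a probability measure μ. Then there exists a ∈ ℝ such that μ = c^{-1} χ_{(a,a+c)} dx, i.e. μ has density c^{-1} on an interval of length c. -/
open MeasureTheory Filter
open scoped ENNReal

open Metric Set Topology
open scoped BoundedContinuousFunction

/-!
Since consecutive points differ by `c / N`, the `N`-th empirical average of `g` is the Riemann sum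
`∫₀¹ g (A_N + c ⌊t N⌋ / N) dt`, where `A_N` is the first point. A test function supported in a ball
and with positive `μ`-integral keeps `A_N` bounded, so `A_N → a` along a subsequence, and dominated
convergence identifies the limit of the Riemann sums as `∫₀¹ g (a + c t) dt`, the integral of `g`
against `c⁻¹ 𝟙_(a, a + c) dx`. Finite measures with the same integrals of bounded continuous
functions coincide.
-/

theorem eq_add_nsmul_of_sub_eq {M : Type*} [AddCommGroup M] {N : ℕ} {y : Fin (N + 1) → M} {d : M}
    (h : ∀ i j : Fin (N + 1), (i : ℕ) + 1 = j → y j - y i = d) (i : Fin (N + 1)) :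
    y i = y 0 + (i : ℕ) • d := by
  induction i using Fin.induction with
  | zero => simp
  | succ i ih =>
    rw [← sub_add_cancel (y i.succ) (y i.castSucc), h _ _ (by simp), ih]
    rw [Fin.val_castSucc, Fin.val_succ, succ_nsmul]
    abel

theorem natCast_mul_div_mem_Icc {N : ℕ} (i : Fin N) {c : ℝ} (hc : 0 ≤ c) :
    (i : ℝ) * (c / N) ∈ Icc 0 c := by
  have hN : (0 : ℝ) < N := by exact_mod_cast i.pos
  have hi : (i : ℝ) ≤ N := by exact_mod_cast i.2.le
  refine ⟨by positivity, ?_⟩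
  rw [mul_div_assoc', div_le_iff₀ hN]
  nlinarith

section Tightness

variable {X : Type*} [PseudoMetricSpace X] [MeasurableSpace X] [OpensMeasurableSpace X]
  (μ : Measure X) [IsFiniteMeasure μ] [NeZero μ] (x₀ : X)

theorem exists_integral_pos_of_support_subset_ball :
    ∃ (g : X →ᵇ ℝ) (R : ℝ), 0 < ∫ x, g x ∂μ ∧ Function.support g ⊆ ball x₀ R := by
  obtain ⟨n, hn⟩ : ∃ n : ℕ, 0 < μ (ball x₀ n) := by
    by_contra! h
    refine NeZero.ne μ (Measure.measure_univ_eq_zero.mp ?_)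
    rw [← iUnion_ball_nat x₀]
    exact measure_iUnion_null fun n => nonpos_iff_eq_zero.mp (h n)
  set f := thickenedIndicator one_pos (ball x₀ n)
  refine ⟨⟨⟨fun x => f x, by fun_prop⟩, f.map_bounded'⟩, 1 + n, ?_, ?_⟩
  · calc 0 < μ.real (ball x₀ n) := ENNReal.toReal_pos hn.ne' (measure_ne_top μ _)
      _ = ∫ x, (ball x₀ n).indicator 1 x ∂μ := (integral_indicator_one measurableSet_ball).symm
      _ ≤ ∫ x, (f x : ℝ) ∂μ := by
        refine integral_mono ((integrable_const 1).indicator measurableSet_ball)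
          (integrable_thickenedIndicator _ one_pos) fun x => ?_
        by_cases hx : x ∈ ball x₀ n
        · simp [hx, f, thickenedIndicator_one one_pos _ hx]
        · simp [hx]
  · intro x hx
    by_contra hx'
    have : f x = 0 := thickenedIndicator_zero one_pos _ fun h => hx' (thickening_ball _ _ _ h)
    exact hx (congrArg NNReal.toReal this)

theorem eventually_exists_mem_ball_of_tendsto_average (y : (N : ℕ) → Fin N → X)
    (h : ∀ g : X →ᵇ ℝ, Tendsto (fun N : ℕ => (1 / (N : ℝ)) * ∑ i : Fin N, g (y N i)) atTop
      (𝓝 (∫ x, g x ∂μ))) :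
    ∃ R, ∀ᶠ N in atTop, ∃ i, y N i ∈ ball x₀ R := by
  obtain ⟨g, R, hg, hR⟩ := exists_integral_pos_of_support_subset_ball μ x₀
  refine ⟨R, ((h g).eventually_ne hg.ne').mono fun N hN => ?_⟩
  by_contra! hout
  exact hN (by simp [Function.notMem_support.mp fun hi => hout _ (hR hi)])

end Tightness

section RiemannSums

variable {E : Type*} [NormedAddCommGroup E] [NormedSpace ℝ E]

theorem integral_ofReal_inv_smul_restrict_Ioo (g : ℝ → E) (a : ℝ) {c : ℝ} (hc : 0 < c) :
    ∫ y, g y ∂(ENNReal.ofReal c⁻¹ • volume.restrict (Ioo a (a + c)))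
      = ∫ t in (0 : ℝ)..1, g (a + c * t) := by
  rw [integral_smul_measure, ENNReal.toReal_ofReal (inv_nonneg.2 hc.le),
    ← integral_Ioc_eq_integral_Ioo, ← intervalIntegral.integral_of_le (by linarith)]
  simp_rw [add_comm a]
  rw [intervalIntegral.integral_comp_mul_add g hc.ne', mul_zero, mul_one, zero_add]

theorem natFloor_mul_eq_of_mem_Ioo {N : ℕ} (hN : N ≠ 0) {k : ℕ} {t : ℝ}
    (ht : t ∈ Ioo ((k : ℝ) / N) ((k + 1 : ℕ) / N)) : ⌊t * N⌋₊ = k := by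
  have hN' : (0 : ℝ) < N := by positivity
  obtain ⟨hk, hk'⟩ := ht
  rw [div_lt_iff₀ hN'] at hk
  rw [lt_div_iff₀ hN'] at hk'
  rw [Nat.floor_eq_iff (by linarith [(Nat.cast_nonneg k : (0 : ℝ) ≤ k)])]
  exact ⟨hk.le, by exact_mod_cast hk'⟩

variable [CompleteSpace E]

theorem intervalIntegral_comp_natFloor_mul_div (f : ℝ → E) {N : ℕ} (hN : N ≠ 0) :
    ∫ t in (0 : ℝ)..1, f (⌊t * N⌋₊ / N) = (1 / (N : ℝ)) • ∑ i : Fin N, f (i / N) := by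
  have hle (k : ℕ) : (k / N : ℝ) ≤ (k + 1 : ℕ) / N := by gcongr; simp
  have hconst (k : ℕ) : EqOn (fun t : ℝ => f (⌊t * N⌋₊ / N)) (fun _ => f (k / N))
      (uIoo ((k : ℝ) / N) (((k + 1 : ℕ) : ℝ) / N)) := fun t ht => by
    rw [uIoo_of_le (hle k)] at ht
    simp only [natFloor_mul_eq_of_mem_Ioo hN ht]
  have hpiece (k : ℕ) : ∫ t in (k / N : ℝ)..((k + 1 : ℕ) / N), f (⌊t * N⌋₊ / N)
      = (1 / (N : ℝ)) • f (k / N) := by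
    rw [intervalIntegral.integral_congr_uIoo (hconst k), intervalIntegral.integral_const]
    congr 1
    field_simp
    push_cast
    ring
  have hsum := intervalIntegral.sum_integral_adjacent_intervals (n := N) fun k _ =>
    (intervalIntegrable_const (μ := volume)).congr_uIoo (hconst k).symm
  simp only [hpiece, CharP.cast_eq_zero, zero_div,
    div_self (Nat.cast_ne_zero.mpr hN : (N : ℝ) ≠ 0)] at hsum
  rw [← hsum, ← Finset.smul_sum, Fin.sum_univ_eq_sum_range (fun i => f (i / N))]

theorem tendsto_average_comp_add_mul (g : ℝ →ᵇ E) {n : ℕ → ℕ} (hn : Tendsto n atTop atTop)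
    {b : ℕ → ℝ} {a : ℝ} (hb : Tendsto b atTop (𝓝 a)) (c : ℝ) :
    Tendsto (fun k => (1 / (n k : ℝ)) • ∑ i : Fin (n k), g (b k + i * (c / n k))) atTop
      (𝓝 (∫ t in (0 : ℝ)..1, g (a + c * t))) := by
  have hlim : Tendsto (fun k => ∫ t in (0 : ℝ)..1, g (b k + c * (⌊t * n k⌋₊ / n k))) atTop
      (𝓝 (∫ t in (0 : ℝ)..1, g (a + c * t))) := by
    refine intervalIntegral.tendsto_integral_filter_of_dominated_convergence (fun _ => ‖g‖)
      (Eventually.of_forall fun k => ?_) (Eventually.of_forall fun k => ?_)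
      intervalIntegrable_const (Eventually.of_forall fun t ht => ?_)
    · exact g.continuous.comp_aestronglyMeasurable (by fun_prop : Measurable _).aestronglyMeasurable
    · exact Eventually.of_forall fun t _ => g.norm_coe_le_norm _
    · have hfloor := (tendsto_nat_floor_mul_div_atTop (le_of_lt (by simpa using ht.1))).comp
        (tendsto_natCast_atTop_atTop.comp hn)
      exact (g.continuous.tendsto _).comp (hb.add (hfloor.const_mul c))
  refine hlim.congr' ((hn.eventually_ne_atTop 0).mono fun k hk => ?_)
  rw [intervalIntegral_comp_natFloor_mul_div (fun s => g (b k + c * s)) hk]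
  simp only [mul_div_assoc', mul_comm]

end RiemannSums

theorem stmt_7_general (c : ℝ) (hc : 0 < c)
    (x : (N : ℕ) → Fin N → ℝ)
    (hspace : ∀ N, ∀ i j : Fin N, (i : ℕ) + 1 = j → x N j - x N i = c / N)
    (μ : Measure ℝ) [IsProbabilityMeasure μ]
    (hconv : ∀ g : BoundedContinuousFunction ℝ ℝ,
      Tendsto (fun N : ℕ => (1 / (N : ℝ)) * ∑ i : Fin N, g (x N i)) atTop
        (nhds (∫ y, g y ∂μ))) :
    ∃ a : ℝ, μ = ENNReal.ofReal c⁻¹ • volume.restrict (Set.Ioo a (a + c)) := by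
  set A : ℕ → ℝ := fun N => x (N + 1) 0
  have hx (N : ℕ) (i : Fin (N + 1)) : x (N + 1) i = A N + i * (c / (N + 1 : ℕ)) := by
    simpa using eq_add_nsmul_of_sub_eq (hspace (N + 1)) i
  have hshift (g : ℝ →ᵇ ℝ) : Tendsto (fun N => (1 / ((N + 1 : ℕ) : ℝ)) •
      ∑ i : Fin (N + 1), g (A N + i * (c / (N + 1 : ℕ)))) atTop (𝓝 (∫ y, g y ∂μ)) := by
    refine ((hconv g).comp (tendsto_add_atTop_nat 1)).congr fun N => ?_
    simp only [Function.comp_apply, hx, smul_eq_mul]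
  obtain ⟨R, hR⟩ := eventually_exists_mem_ball_of_tendsto_average μ 0 x hconv
  have hA : ∀ᶠ N in atTop, A N ∈ Icc (-R - c) R := by
    filter_upwards [(tendsto_add_atTop_nat 1).eventually hR] with N ⟨i, hi⟩
    have hstep := natCast_mul_div_mem_Icc i hc.le
    rw [mem_ball, Real.dist_eq, sub_zero, abs_lt, hx] at hi
    constructor <;> linarith [hi.1, hi.2, hstep.1, hstep.2]
  obtain ⟨a, -, φ, hφ, hAφ⟩ :=
    tendsto_subseq_of_frequently_bounded (isBounded_Icc _ _) hA.frequently
  have := Measure.smul_finite (volume.restrict (Ioo a (a + c))) (ENNReal.ofReal_ne_top (r := c⁻¹))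
  refine ⟨a, ext_of_forall_integral_eq_of_IsFiniteMeasure fun g => ?_⟩
  rw [integral_ofReal_inv_smul_restrict_Ioo g a hc]
  exact tendsto_nhds_unique ((hshift g).comp hφ.tendsto_atTop)
    (tendsto_average_comp_add_mul g ((tendsto_add_atTop_nat 1).comp hφ.tendsto_atTop) hAφ c)

theorem stmt_7 (c : ℝ) (hc : 0 < c)
    (x : (N : ℕ) → Fin N → ℝ)
    (hord : ∀ N, ∀ i j : Fin N, i ≤ j → x N i ≤ x N j)
    (hspace : ∀ N, ∀ i j : Fin N, (i : ℕ) + 1 = j → x N j - x N i = c / N)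
    (μ : Measure ℝ) [IsProbabilityMeasure μ]
    (hconv : ∀ g : BoundedContinuousFunction ℝ ℝ,
      Tendsto (fun N : ℕ => (1 / (N : ℝ)) * ∑ i : Fin N, g (x N i)) atTop
        (nhds (∫ y, g y ∂μ))) :
    ∃ a : ℝ, μ = ENNReal.ofReal c⁻¹ • volume.restrict (Set.Ioo a (a + c)) :=
  stmt_7_general c hc x hspace μ hconv
end

section
/- Let K : [0,∞) → [0,∞) be nonincreasing with K(|·|) locally integrable on ℝ^d. If x = (x^1,...,x^N) ∈ (ℝ^d)^N satisfies |x^i - x^j| ≥ δ := c N^{-1/d} for i ≠ j, then for every i and every r ≥ δ, Σ_{j ≠ i, x^j ∈ B_r(x^i)} K(|x^i - x^j|) ≤ (8^d N)/(c^d ω_d) ∫_{B_r(0)} K(|y|) dy. -/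
/-!
Move each `x j - x i` (for `x j ∈ B_r(x i)`, `j ≠ i`) towards the origin by `ρ = δ / 4`; the ball
of radius `ρ` around the moved point lies in `B_r(0)`, consists of points of norm less than
`‖x j - x i‖` (so `K ‖·‖` dominates the term `K ‖x i - x j‖` there), and these balls are pairwise
disjoint because the points are `4ρ`-separated. Integrating over their union gives
`(∑ K ‖x i - x j‖) · ρ^d ω_d ≤ ∫_{B_r(0)} K ‖y‖ dy` with `ρ^d ω_d = c^d ω_d / (4^d N)`.
-/

open MeasureTheory Metric Set
open scoped Classical

section Normed

variable {E : Type*} [NormedAddCommGroup E] [NormedSpace ℝ E]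

noncomputable def stepTowardZero (ρ : ℝ) (u : E) : E :=
  AffineMap.lineMap u 0 (ρ / ‖u‖)

theorem dist_stepTowardZero_self {u : E} (hu : u ≠ 0) {ρ : ℝ} (hρ : 0 ≤ ρ) :
    dist (stepTowardZero ρ u) u = ρ := by
  rw [stepTowardZero, dist_lineMap_left, dist_zero_right, Real.norm_of_nonneg (by positivity),
    div_mul_cancel₀ _ (norm_ne_zero_iff.mpr hu)]

theorem norm_stepTowardZero {u : E} (hu : u ≠ 0) {ρ : ℝ} (hρu : ρ ≤ ‖u‖) :
    ‖stepTowardZero ρ u‖ = ‖u‖ - ρ := by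
  have hu' : 0 < ‖u‖ := norm_pos_iff.mpr hu
  rw [← dist_zero_right, stepTowardZero, dist_lineMap_right, dist_zero_right,
    Real.norm_of_nonneg (sub_nonneg.mpr ((div_le_one hu').mpr hρu))]
  field_simp

theorem ball_stepTowardZero_subset {u : E} (hu : u ≠ 0) {ρ : ℝ} (hρu : ρ ≤ ‖u‖) :
    ball (stepTowardZero ρ u) ρ ⊆ ball 0 ‖u‖ :=
  ball_subset_ball' <| by rw [dist_zero_right, norm_stepTowardZero hu hρu, add_sub_cancel]

theorem disjoint_ball_stepTowardZero {u v : E} (hu : u ≠ 0) (hv : v ≠ 0) {ρ : ℝ} (hρ : 0 ≤ ρ)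
    (huv : 4 * ρ ≤ dist u v) :
    Disjoint (ball (stepTowardZero ρ u) ρ) (ball (stepTowardZero ρ v) ρ) := by
  apply ball_disjoint_ball
  have := dist_triangle4 u (stepTowardZero ρ u) (stepTowardZero ρ v) v
  rw [dist_comm u (stepTowardZero ρ u), dist_stepTowardZero_self hu hρ,
    dist_stepTowardZero_self hv hρ] at this
  linarith

end Normed

section Packing

variable {E : Type*} [NormedAddCommGroup E] [NormedSpace ℝ E] [MeasurableSpace E] [BorelSpace E]
  [FiniteDimensional ℝ E] (μ : Measure E) [μ.IsAddHaarMeasure] {K : ℝ → ℝ}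

theorem Measure.addHaar_real_ball_of_pos (x : E) {r : ℝ} (hr : 0 < r) :
    μ.real (ball x r) = r ^ Module.finrank ℝ E * μ.real (ball 0 1) := by
  rw [measureReal_def, Measure.addHaar_ball_of_pos μ x hr, ENNReal.toReal_mul,
    ENNReal.toReal_ofReal (by positivity), measureReal_def]

theorem mul_measureReal_ball_le_setIntegral_ball_stepTowardZero (hK : AntitoneOn K (Ici 0))
    {u : E} (hu : u ≠ 0) {ρ : ℝ} (hρu : ρ ≤ ‖u‖)
    (hint : IntegrableOn (fun y => K ‖y‖) (ball (stepTowardZero ρ u) ρ) μ) :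
    K ‖u‖ * μ.real (ball 0 ρ) ≤ ∫ y in ball (stepTowardZero ρ u) ρ, K ‖y‖ ∂μ := by
  rw [← Measure.addHaar_real_ball_center μ (stepTowardZero ρ u), mul_comm, ← smul_eq_mul,
    ← setIntegral_const]
  refine setIntegral_mono_on (integrableOn_const measure_ball_lt_top.ne) hint measurableSet_ball
    fun y hy => hK (norm_nonneg y) (norm_nonneg u) ?_
  exact (mem_ball_zero_iff.mp (ball_stepTowardZero_subset hu hρu hy)).le

theorem sum_mul_measureReal_ball_le_setIntegral {ι : Type*} (S : Finset ι) (u : ι → E)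
    (hK0 : ∀ t, 0 ≤ K t) (hK : AntitoneOn K (Ici 0)) {ρ r : ℝ} (hρ : 0 < ρ)
    (hint : IntegrableOn (fun y => K ‖y‖) (ball 0 r) μ)
    (hu : ∀ j ∈ S, ρ ≤ ‖u j‖ ∧ ‖u j‖ < r)
    (hsep : (S : Set ι).Pairwise fun j k => 4 * ρ ≤ dist (u j) (u k)) :
    (∑ j ∈ S, K ‖u j‖) * μ.real (ball 0 ρ) ≤ ∫ y in ball 0 r, K ‖y‖ ∂μ := by
  have hne : ∀ j ∈ S, u j ≠ 0 := fun j hj => norm_pos_iff.mp (hρ.trans_le (hu j hj).1)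
  have hsub : ∀ j ∈ S, ball (stepTowardZero ρ (u j)) ρ ⊆ ball 0 r := fun j hj =>
    (ball_stepTowardZero_subset (hne j hj) (hu j hj).1).trans (ball_subset_ball (hu j hj).2.le)
  calc (∑ j ∈ S, K ‖u j‖) * μ.real (ball 0 ρ)
      ≤ ∑ j ∈ S, ∫ y in ball (stepTowardZero ρ (u j)) ρ, K ‖y‖ ∂μ := by
        rw [Finset.sum_mul]
        exact Finset.sum_le_sum fun j hj =>
          mul_measureReal_ball_le_setIntegral_ball_stepTowardZero μ hK (hne j hj) (hu j hj).1
            (hint.mono_set (hsub j hj))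
    _ = ∫ y in ⋃ j ∈ S, ball (stepTowardZero ρ (u j)) ρ, K ‖y‖ ∂μ :=
        (integral_biUnion_finset S (fun _ _ => measurableSet_ball)
          (fun j hj k hk hjk => disjoint_ball_stepTowardZero (hne j hj) (hne k hk) hρ.le
            (hsep hj hk hjk))
          fun j hj => hint.mono_set (hsub j hj)).symm
    _ ≤ ∫ y in ball 0 r, K ‖y‖ ∂μ :=
        setIntegral_mono_set hint (.of_forall fun _ => hK0 _)
          (iUnion₂_subset hsub).eventuallyLE

end Packing

theorem Real.rpow_neg_one_div_natCast_pow {x : ℝ} (hx : 0 ≤ x) {n : ℕ} (hn : n ≠ 0) :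
    (x ^ (-1 / n : ℝ)) ^ n = x⁻¹ := by
  rw [neg_div, one_div, Real.rpow_neg hx, inv_pow, Real.rpow_inv_natCast_pow hx hn]

theorem stmt_8_general (d : ℕ) (hd : 1 ≤ d) (c : ℝ) (hc : 0 < c)
    (K : ℝ → ℝ) (hK0 : ∀ r, 0 ≤ K r)
    (hKmono : ∀ r s : ℝ, 0 ≤ r → r ≤ s → K s ≤ K r)
    (hKloc : LocallyIntegrable (fun y : EuclideanSpace ℝ (Fin d) => K ‖y‖) volume)
    (N : ℕ) (x : Fin N → EuclideanSpace ℝ (Fin d))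
    (δ : ℝ) (hδ : δ = c * (N : ℝ) ^ (-(1 : ℝ) / d))
    (hdist : ∀ i j : Fin N, i ≠ j → δ ≤ ‖x i - x j‖)
    (ωd : ℝ) (hωd : ωd = (volume (Metric.ball (0 : EuclideanSpace ℝ (Fin d)) 1)).toReal)
    (i : Fin N) (r : ℝ) :
    ∑ j ∈ Finset.univ.filter (fun j : Fin N => j ≠ i ∧ x j ∈ Metric.ball (x i) r),
        K ‖x i - x j‖
      ≤ (8 ^ d * N) / (c ^ d * ωd) * ∫ y in Metric.ball (0 : EuclideanSpace ℝ (Fin d)) r, K ‖y‖ := by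
  have hN : (0 : ℝ) < N := Nat.cast_pos.mpr i.pos
  have hδ0 : 0 < δ := hδ ▸ mul_pos hc (Real.rpow_pos_of_pos hN _)
  have hωd0 : 0 < ωd :=
    hωd ▸ ENNReal.toReal_pos (measure_ball_pos volume _ one_pos).ne' measure_ball_lt_top.ne
  have hball : volume.real (ball (0 : EuclideanSpace ℝ (Fin d)) (δ / 4))
      = c ^ d * ωd / (4 ^ d * N) := by
    rw [Measure.addHaar_real_ball_of_pos _ _ (by positivity), finrank_euclideanSpace_fin,
      measureReal_def, ← hωd, div_pow, hδ, mul_pow, Real.rpow_neg_one_div_natCast_pow hN.le (by omega)]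
    field_simp
  set S := Finset.univ.filter fun j : Fin N => j ≠ i ∧ x j ∈ ball (x i) r
  have hnear : ∀ j ∈ S, δ / 4 ≤ ‖x j - x i‖ ∧ ‖x j - x i‖ < r := fun j hj => by
    obtain ⟨hji, hjr⟩ := (Finset.mem_filter.mp hj).2
    refine ⟨?_, mem_ball_iff_norm.mp hjr⟩
    linarith [norm_sub_rev (x j) (x i) ▸ hdist i j (Ne.symm hji)]
  have hsep : (S : Set (Fin N)).Pairwise fun j k => 4 * (δ / 4) ≤ dist (x j - x i) (x k - x i) :=
    fun j _ k _ hjk => by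
      dsimp only
      rw [dist_sub_right, dist_eq_norm, mul_div_cancel₀ _ four_ne_zero]
      exact hdist j k hjk
  have hpack := sum_mul_measureReal_ball_le_setIntegral volume S (fun j => x j - x i) hK0
    (fun a ha b _ hab => hKmono a b ha hab) (by positivity)
    ((hKloc.integrableOn_isCompact (isCompact_closedBall 0 r)).mono_set ball_subset_closedBall)
    hnear hsep
  have hI : 0 ≤ ∫ y in ball (0 : EuclideanSpace ℝ (Fin d)) r, K ‖y‖ :=
    setIntegral_nonneg measurableSet_ball fun y _ => hK0 _
  simp_rw [norm_sub_rev (x i)]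
  rw [hball, ← le_div_iff₀ (by positivity)] at hpack
  calc _ ≤ _ := hpack
    _ = (4 ^ d * N) / (c ^ d * ωd) * ∫ y in ball (0 : EuclideanSpace ℝ (Fin d)) r, K ‖y‖ := by
      field_simp
    _ ≤ _ := by gcongr; norm_num

theorem stmt_8 (d : ℕ) (hd : 1 ≤ d) (c : ℝ) (hc : 0 < c)
    (K : ℝ → ℝ) (hK0 : ∀ r, 0 ≤ K r)
    (hKmono : ∀ r s : ℝ, 0 ≤ r → r ≤ s → K s ≤ K r)
    (hKloc : LocallyIntegrable (fun y : EuclideanSpace ℝ (Fin d) => K ‖y‖) volume)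
    (N : ℕ) (x : Fin N → EuclideanSpace ℝ (Fin d))
    (δ : ℝ) (hδ : δ = c * (N : ℝ) ^ (-(1 : ℝ) / d))
    (hdist : ∀ i j : Fin N, i ≠ j → δ ≤ ‖x i - x j‖)
    (ωd : ℝ) (hωd : ωd = (volume (Metric.ball (0 : EuclideanSpace ℝ (Fin d)) 1)).toReal)
    (i : Fin N) (r : ℝ) (hr : δ ≤ r) :
    ∑ j ∈ Finset.univ.filter (fun j : Fin N => j ≠ i ∧ x j ∈ Metric.ball (x i) r),
        K ‖x i - x j‖
      ≤ (8 ^ d * N) / (c ^ d * ωd) * ∫ y in Metric.ball (0 : EuclideanSpace ℝ (Fin d)) r, K ‖y‖ :=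
  stmt_8_general d hd c hc K hK0 hKmono hKloc N x δ hδ hdist ωd hωd i r
end

section
/- Let K : [0,∞) → [0,∞) be nonincreasing with r ↦ r^{d-1}K(r) locally integrable. There exists a constant C_K depending only on c, d, K such that for all N and all x ∈ (ℝ^d)^N with |x^i - x^j| ≥ c N^{-1/d} for i ≠ j, the discrete interaction energy satisfies (1/N²) Σ_{i≠j} K(|x^i - x^j|) ≤ C_K. -/
/-! Put `δ = c N^{-1/d}` and `g(s) = s^{d-1} K(s)`. Around a fixed particle, the neighbours at
distance `> 1` contribute at most `N K(1)`. A neighbour at distance `r ≤ 1` has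
`K(r) ≤ (2/r)^d ∫_{r/2}^r g` because `K` is nonincreasing. A point `s` lies in `(r/2, r]` only
for neighbours within `2s`, and comparing volumes of disjoint balls of radius `δ/2` shows there
are at most `(6s/δ)^d` of them, so the weights `(2/r)^d` of the intervals containing `s` add up
to at most `(12/δ)^d = (12/c)^d N`. Each particle therefore sees at most
`N (K(1) + (12/c)^d ∫_0^1 g)`, and summing over the `N` particles gives the claim. -/

open MeasureTheory Metric Module Finset Set

theorem half_pow_mul_le_setIntegral {K : ℝ → ℝ} {d : ℕ} (hd : 1 ≤ d) {r : ℝ} (hr : 0 < r)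
    (hK0 : 0 ≤ K r) (hK : ∀ s ∈ Ioc (r / 2) r, K r ≤ K s)
    (hint : IntegrableOn (fun s => s ^ (d - 1) * K s) (Ioc (r / 2) r)) :
    (r / 2) ^ d * K r ≤ ∫ s in Ioc (r / 2) r, s ^ (d - 1) * K s := by
  calc (r / 2) ^ d * K r = ∫ _ in Ioc (r / 2) r, (r / 2) ^ (d - 1) * K r := by
        rw [setIntegral_const, Real.volume_real_Ioc_of_le (by linarith), smul_eq_mul,
          ← mul_assoc, show r - r / 2 = r / 2 by ring, ← pow_succ', Nat.sub_add_cancel hd]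
    _ ≤ ∫ s in Ioc (r / 2) r, s ^ (d - 1) * K s := by
        refine setIntegral_mono_on (integrableOn_const (by simp)) hint measurableSet_Ioc
          fun s hs => ?_
        have : 0 < s := by linarith [hs.1]
        exact mul_le_mul (pow_le_pow_left₀ (by positivity) hs.1.le _) (hK s hs) hK0 (by positivity)

open Classical in
theorem sum_mul_setIntegral_le {α ι : Type*} [MeasurableSpace α] {μ : Measure α} {S : Set α}
    {T : ι → Set α} {A : Finset ι} {a : ι → ℝ} {g : α → ℝ} {M : ℝ} (hS : MeasurableSet S)
    (hT : ∀ j ∈ A, MeasurableSet (T j)) (hTS : ∀ j ∈ A, T j ⊆ S) (hg : IntegrableOn g S μ)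
    (hg0 : ∀ s ∈ S, 0 ≤ g s) (hM : ∀ s ∈ S, ∑ j ∈ A with s ∈ T j, a j ≤ M) :
    ∑ j ∈ A, a j * ∫ s in T j, g s ∂μ ≤ M * ∫ s in S, g s ∂μ := by
  have hint (j) (hj : j ∈ A) : IntegrableOn (fun s => a j * (T j).indicator g s) S μ :=
    (hg.indicator (hT j hj)).const_mul (a j)
  calc ∑ j ∈ A, a j * ∫ s in T j, g s ∂μ
      = ∫ s in S, ∑ j ∈ A, a j * (T j).indicator g s ∂μ := by
        rw [integral_finsetSum A hint]
        refine sum_congr rfl fun j hj => ?_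
        rw [integral_const_mul, setIntegral_indicator (hT j hj),
          inter_eq_self_of_subset_right (hTS j hj)]
    _ ≤ ∫ s in S, M * g s ∂μ := by
        refine setIntegral_mono_on (integrable_finsetSum A hint) (hg.const_mul M) hS
          fun s hs => ?_
        have hsum : ∑ j ∈ A, a j * (T j).indicator g s = (∑ j ∈ A with s ∈ T j, a j) * g s := by
          simp only [indicator_apply, mul_ite, mul_zero, ← sum_filter, sum_mul]
        rw [hsum]
        exact mul_le_mul_of_nonneg_right (hM s hs) (hg0 s hs)
    _ = M * ∫ s in S, g s ∂μ := integral_const_mul M _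

section Separated

variable {E : Type*} [NormedAddCommGroup E] [NormedSpace ℝ E] [FiniteDimensional ℝ E]

theorem card_mul_pow_le_of_pairwise_le_dist {ι : Type*} {x : ι → E} {s : Finset ι} {z : E}
    {δ t : ℝ} (hδ : 0 < δ) (ht : 0 ≤ t)
    (hsep : (s : Set ι).Pairwise fun i j => δ ≤ dist (x i) (x j))
    (hs : ∀ j ∈ s, dist z (x j) ≤ t) :
    (#s : ℝ) * (δ / 2) ^ finrank ℝ E ≤ (t + δ / 2) ^ finrank ℝ E := by
  borelize E
  let μ : Measure E := Measure.addHaar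
  have hvol (y : E) {r : ℝ} (hr : 0 < r) :
      μ.real (ball y r) = r ^ finrank ℝ E * μ.real (ball 0 1) := by
    rw [measureReal_def, μ.addHaar_ball_of_pos y hr, ENNReal.toReal_mul,
      ENNReal.toReal_ofReal (by positivity), measureReal_def]
  have hdisj : (s : Set ι).PairwiseDisjoint fun j => ball (x j) (δ / 2) :=
    fun i hi j hj hij => ball_disjoint_ball (by linarith [hsep hi hj hij])
  have hsub : ⋃ j ∈ s, ball (x j) (δ / 2) ⊆ ball z (t + δ / 2) := by
    simp only [iUnion_subset_iff]
    intro j hj y hy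
    rw [mem_ball] at hy ⊢
    linarith [dist_triangle y (x j) z, dist_comm z (x j), hs j hj]
  have hle := measureReal_mono (μ := μ) hsub
  rw [measureReal_biUnion_finset hdisj (fun _ _ => measurableSet_ball)] at hle
  simp only [hvol _ (half_pos hδ), hvol _ (by positivity : 0 < t + δ / 2), sum_const,
    nsmul_eq_mul, ← mul_assoc] at hle
  exact le_of_mul_le_mul_right hle
    (ENNReal.toReal_pos (measure_ball_pos μ 0 one_pos).ne' measure_ball_lt_top.ne)

theorem card_filter_dist_le_le {ι : Type*} [Fintype ι] {x : ι → E} {z : E} {δ t : ℝ}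
    (hδ : 0 < δ) (hδt : δ ≤ t) (hsep : Pairwise fun i j => δ ≤ dist (x i) (x j)) :
    (#(univ.filter fun j => dist z (x j) ≤ t) : ℝ) ≤ (3 * t / δ) ^ finrank ℝ E := by
  have hpack := card_mul_pow_le_of_pairwise_le_dist (x := x) (z := z) hδ (hδ.le.trans hδt)
    (fun i _ j _ hij => hsep hij) (s := univ.filter fun j => dist z (x j) ≤ t)
    (fun j hj => (mem_filter.1 hj).2)
  rw [show 3 * t / δ = 3 * t / 2 / (δ / 2) by field_simp, div_pow, le_div_iff₀ (by positivity)]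
  exact hpack.trans (pow_le_pow_left₀ (by linarith) (by linarith) _)

theorem sum_pow_div_dist_le {ι : Type*} [Fintype ι] {x : ι → E} {z : E} {δ : ℝ}
    (hδ : 0 < δ) (hsep : Pairwise fun i j => δ ≤ dist (x i) (x j))
    {A : Finset ι} (hA : ∀ j ∈ A, δ ≤ dist z (x j)) {s : ℝ} (hs : 0 < s) :
    ∑ j ∈ A with s ∈ Ioc (dist z (x j) / 2) (dist z (x j)), (2 / dist z (x j)) ^ finrank ℝ E
      ≤ (12 / δ) ^ finrank ℝ E := by
  set B := A.filter fun j => s ∈ Ioc (dist z (x j) / 2) (dist z (x j))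
  have hB (j) (hj : j ∈ B) : δ ≤ dist z (x j) ∧ dist z (x j) / 2 < s ∧ s ≤ dist z (x j) := by
    obtain ⟨hjA, hjs⟩ := mem_filter.1 hj
    exact ⟨hA j hjA, hjs⟩
  obtain hBe | ⟨j₀, hj₀⟩ := B.eq_empty_or_nonempty
  · rw [hBe, sum_empty]
    positivity
  have hδs : δ ≤ 2 * s := by linarith [hB j₀ hj₀]
  have hcard : (#B : ℝ) ≤ (6 * s / δ) ^ finrank ℝ E := by
    refine le_trans ?_ ((card_filter_dist_le_le (z := z) hδ hδs hsep).trans_eq (by ring_nf))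
    exact_mod_cast Finset.card_le_card fun j hj => mem_filter.2 ⟨mem_univ j, by linarith [hB j hj]⟩
  calc ∑ j ∈ B, (2 / dist z (x j)) ^ finrank ℝ E
      ≤ ∑ j ∈ B, (2 / s) ^ finrank ℝ E := sum_le_sum fun j hj => by
        have := hB j hj
        gcongr
        linarith
    _ = #B * (2 / s) ^ finrank ℝ E := by rw [sum_const, nsmul_eq_mul]
    _ ≤ (6 * s / δ) ^ finrank ℝ E * (2 / s) ^ finrank ℝ E := by gcongr
    _ = (12 / δ) ^ finrank ℝ E := by
        rw [← mul_pow]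
        congr 1
        field_simp
        norm_num

theorem sum_kernel_dist_le_setIntegral {ι : Type*} [Fintype ι] {x : ι → E} {z : E} {δ : ℝ}
    (hδ : 0 < δ) (hsep : Pairwise fun i j => δ ≤ dist (x i) (x j)) {K : ℝ → ℝ}
    (hK0 : ∀ r, 0 ≤ K r) (hK : AntitoneOn K (Ioi 0)) (hn : 1 ≤ finrank ℝ E)
    (hg : IntegrableOn (fun s => s ^ (finrank ℝ E - 1) * K s) (Ioc 0 1))
    {A : Finset ι} (hA : ∀ j ∈ A, δ ≤ dist z (x j) ∧ dist z (x j) ≤ 1) :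
    ∑ j ∈ A, K (dist z (x j))
      ≤ (12 / δ) ^ finrank ℝ E * ∫ s in Ioc 0 1, s ^ (finrank ℝ E - 1) * K s := by
  have hsub (j) (hj : j ∈ A) : Ioc (dist z (x j) / 2) (dist z (x j)) ⊆ Ioc 0 1 :=
    Ioc_subset_Ioc (by linarith [hδ.trans_le (hA j hj).1]) (hA j hj).2
  have hK_le (j) (hj : j ∈ A) : K (dist z (x j)) ≤ (2 / dist z (x j)) ^ finrank ℝ E *
      ∫ s in Ioc (dist z (x j) / 2) (dist z (x j)), s ^ (finrank ℝ E - 1) * K s := by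
    have hr : 0 < dist z (x j) := hδ.trans_le (hA j hj).1
    have hhalf := half_pow_mul_le_setIntegral hn hr (hK0 _)
      (fun s hs => hK (show 0 < s by linarith [hs.1]) hr hs.2) (hg.mono_set (hsub j hj))
    calc K (dist z (x j))
        = (2 / dist z (x j)) ^ finrank ℝ E *
            ((dist z (x j) / 2) ^ finrank ℝ E * K (dist z (x j))) := by
          rw [← mul_assoc, ← mul_pow, div_mul_div_cancel₀ hr.ne', div_self two_ne_zero, one_pow,
            one_mul]
      _ ≤ _ := by gcongr
  refine (sum_le_sum hK_le).trans <| sum_mul_setIntegral_le measurableSet_Ioc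
    (fun _ _ => measurableSet_Ioc) hsub hg (fun s hs => mul_nonneg (pow_nonneg hs.1.le _) (hK0 s))
    fun s hs => ?_
  convert sum_pow_div_dist_le hδ hsep (fun j hj => (hA j hj).1) hs.1

theorem sum_kernel_dist_ne_le {ι : Type*} [Fintype ι] [DecidableEq ι] {x : ι → E} {δ : ℝ}
    (hδ : 0 < δ) (hsep : Pairwise fun i j => δ ≤ dist (x i) (x j)) {K : ℝ → ℝ}
    (hK0 : ∀ r, 0 ≤ K r) (hK : AntitoneOn K (Ioi 0)) (hn : 1 ≤ finrank ℝ E)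
    (hg : IntegrableOn (fun s => s ^ (finrank ℝ E - 1) * K s) (Ioc 0 1)) (i : ι) :
    ∑ j ∈ univ.filter (· ≠ i), K (dist (x i) (x j))
      ≤ Fintype.card ι * K 1
        + (12 / δ) ^ finrank ℝ E * ∫ s in Ioc 0 1, s ^ (finrank ℝ E - 1) * K s := by
  rw [← sum_filter_add_sum_filter_not _ fun j => dist (x i) (x j) ≤ 1, add_comm]
  refine add_le_add ?_ (sum_kernel_dist_le_setIntegral hδ hsep hK0 hK hn hg fun j hj => ?_)
  · refine (sum_le_card_nsmul _ _ (K 1) fun j hj => ?_).trans ?_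
    · have hj1 : 1 < dist (x i) (x j) := not_le.1 (mem_filter.1 hj).2
      exact hK (zero_lt_one : (0 : ℝ) < 1) (one_pos.trans hj1) hj1.le
    · rw [nsmul_eq_mul]
      exact mul_le_mul_of_nonneg_right (mod_cast card_le_univ _) (hK0 1)
  · simp only [mem_filter, Finset.mem_univ, true_and] at hj
    exact ⟨hsep (Ne.symm hj.1), hj.2⟩

end Separated

theorem stmt_9 (d : ℕ) (hd : 1 ≤ d) (c : ℝ) (hc : 0 < c)
    (K : ℝ → ℝ) (hK0 : ∀ r, 0 ≤ K r)
    (hKmono : ∀ r s : ℝ, 0 ≤ r → r ≤ s → K s ≤ K r)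
    (hKloc : ∀ R : ℝ, 0 < R → IntegrableOn (fun r : ℝ => r ^ (d - 1) * K r) (Set.Ioc 0 R)) :
    ∃ C : ℝ, ∀ N : ℕ, ∀ x : Fin N → EuclideanSpace ℝ (Fin d),
      (∀ i j : Fin N, i ≠ j → c * (N : ℝ) ^ (-(1 : ℝ) / d) ≤ ‖x i - x j‖) →
      (1 / (N : ℝ) ^ 2) *
          ∑ i : Fin N, ∑ j ∈ Finset.univ.filter (fun j : Fin N => j ≠ i), K ‖x i - x j‖
        ≤ C := by
  set I := ∫ s in Ioc (0 : ℝ) 1, s ^ (d - 1) * K s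
  have hI : 0 ≤ I := setIntegral_nonneg measurableSet_Ioc fun s hs =>
    mul_nonneg (pow_nonneg hs.1.le _) (hK0 s)
  refine ⟨K 1 + (12 / c) ^ d * I, fun N x hx => ?_⟩
  obtain rfl | hN := N.eq_zero_or_pos
  · simpa using add_nonneg (hK0 1) (by positivity)
  set δ := c * (N : ℝ) ^ (-(1 : ℝ) / d)
  have hδ : 0 < δ := by positivity
  have hδd : δ ^ d = c ^ d / N := by
    rw [mul_pow, ← Real.rpow_natCast ((N : ℝ) ^ _), ← Real.rpow_mul (Nat.cast_nonneg N),
      div_mul_cancel₀ _ (by positivity), Real.rpow_neg_one, div_eq_mul_inv]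
  have hpoint := sum_kernel_dist_ne_le (E := EuclideanSpace ℝ (Fin d)) hδ
    (fun i j hij => (hx i j hij).trans_eq (dist_eq_norm _ _).symm) hK0
    (fun r hr s _ hrs => hKmono r s (le_of_lt hr) hrs) (by simpa using hd)
    (by simpa using hKloc 1 one_pos)
  simp only [finrank_euclideanSpace_fin, Fintype.card_fin, dist_eq_norm, div_pow, hδd] at hpoint
  calc (1 / (N : ℝ) ^ 2) * ∑ i : Fin N, ∑ j ∈ univ.filter (· ≠ i), K ‖x i - x j‖
      ≤ (1 / (N : ℝ) ^ 2) * ∑ _i : Fin N, (N * K 1 + 12 ^ d / (c ^ d / N) * I) := by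
        gcongr with i
        exact hpoint i
    _ = K 1 + (12 / c) ^ d * I := by
        rw [sum_const, card_univ, Fintype.card_fin, nsmul_eq_mul, div_pow]
        field_simp
end

section
/- Fix integers 1 ≤ i ≤ N ≤ N and R_0 > 0. Define the truncation x̄^i := max(min(x^i, R_0 + i/N), -R_0 - (N+1-i)/N). If x^{i+1} ≥ x^i + 1/N for all i, then x̄^{i+1} ≥ x̄^i + 1/N for all i, and moreover x̄^{i+1} - x̄^i ≤ x^{i+1} - x^i. -/
/-! Truncating to `[l, u]` is monotone and `1`-Lipschitz, and shifting the window by `δ` shifts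
the truncation by `δ`. Since the window of coordinate `i + 1` is that of coordinate `i` moved by
`1 / N`, the gap `x̄^{i+1} - x̄^i - 1/N` is the increment of one truncation map between `x^i` and
`x^{i+1} - 1/N`, which lies in `[0, x^{i+1} - x^i - 1/N]`. -/

section Truncation

variable {α : Type*} [AddCommGroup α] [LinearOrder α] [IsOrderedAddMonoid α]

theorem max_min_add_add_right (x u l δ : α) :
    max (min (x + δ) (u + δ)) (l + δ) = max (min x u) l + δ := by
  rw [min_add_add_right, max_add_add_right]

theorem max_min_sub_max_min_le {a b : α} (h : a ≤ b) (u l : α) :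
    max (min b u) l - max (min a u) l ≤ b - a :=
  calc max (min b u) l - max (min a u) l
      ≤ |max (min b u) l - max (min a u) l| := le_abs_self _
    _ ≤ |min b u - min a u| := abs_max_sub_max_le_abs _ _ _
    _ ≤ max |b - a| |u - u| := abs_min_sub_min_le_max _ _ _ _
    _ = b - a := by simp [abs_of_nonneg (sub_nonneg.2 h), h]

theorem max_min_shift_gap {x y δ : α} (h : x + δ ≤ y) (u l : α) :
    max (min x u) l + δ ≤ max (min y (u + δ)) (l + δ) ∧
      max (min y (u + δ)) (l + δ) - max (min x u) l ≤ y - x := by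
  have hx : x ≤ y - δ := le_sub_iff_add_le.2 h
  have hshift := max_min_add_add_right (y - δ) u l δ
  rw [sub_add_cancel] at hshift
  rw [hshift]
  refine ⟨by gcongr, ?_⟩
  calc max (min (y - δ) u) l + δ - max (min x u) l
      = max (min (y - δ) u) l - max (min x u) l + δ := by abel
    _ ≤ y - δ - x + δ := add_le_add (max_min_sub_max_min_le hx u l) le_rfl
    _ = y - x := by abel

end Truncation

theorem stmt_11_general (N : ℕ) (R0 : ℝ)
    (x : ℕ → ℝ)
    (hord : ∀ i ∈ Finset.Icc 1 (N - 1), x i + 1 / N ≤ x (i + 1))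
    (xb : ℕ → ℝ)
    (hxb : ∀ i, xb i = max (min (x i) (R0 + (i : ℝ) / N)) (-R0 - ((N : ℝ) + 1 - i) / N)) :
    ∀ i ∈ Finset.Icc 1 (N - 1),
      xb i + 1 / N ≤ xb (i + 1) ∧ xb (i + 1) - xb i ≤ x (i + 1) - x i := by
  intro i hi
  have hupper : R0 + ((i + 1 : ℕ) : ℝ) / N = R0 + (i : ℝ) / N + 1 / N := by push_cast; ring
  have hlower : -R0 - ((N : ℝ) + 1 - ((i + 1 : ℕ) : ℝ)) / N
      = -R0 - ((N : ℝ) + 1 - i) / N + 1 / N := by push_cast; ring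
  rw [hxb, hxb, hupper, hlower]
  exact max_min_shift_gap (hord i hi) _ _

theorem stmt_11 (N : ℕ) (hN : 1 ≤ N) (R0 : ℝ) (hR0 : 0 < R0)
    (x : ℕ → ℝ)
    (hord : ∀ i ∈ Finset.Icc 1 (N - 1), x i + 1 / N ≤ x (i + 1))
    (xb : ℕ → ℝ)
    (hxb : ∀ i, xb i = max (min (x i) (R0 + (i : ℝ) / N)) (-R0 - ((N : ℝ) + 1 - i) / N)) :
    ∀ i ∈ Finset.Icc 1 (N - 1),
      xb i + 1 / N ≤ xb (i + 1) ∧ xb (i + 1) - xb i ≤ x (i + 1) - x i :=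
  stmt_11_general N R0 x hord xb hxb
end

section
/- In the setting of the quantile construction above, for any bounded L-Lipschitz function φ : ℝ → ℝ, one has |∫_{(-R,R)} φ d(M_R m^N_x - m dx)| ≤ (2 M_R / N)(‖φ‖_∞ + R L). -/
/-!
Cut `[-R, R]` at points `-R = a₀ ≤ a₁ ≤ ⋯ ≤ a_N = R` where the primitive `F` of `m` takes the
values `k M_R / N`, so that every cell `[a_k, a_{k+1}]` carries mass `M_R / N`. At the quantile
point `x^{k+1}`, `F` takes the midpoint value `(k + ½) M_R / N`; as `M_R > 0` and `F` is monotone,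
`x^{k+1}` lies in the `k`-th cell. There `φ` differs from `φ (x^{k+1})` by at most
`L (a_{k+1} - a_k)`, so the total error is at most `L (M_R / N) ∑ (a_{k+1} - a_k) = 2 R L M_R / N`.
-/
open MeasureTheory Set intervalIntegral
open scoped NNReal

section Quadrature

variable {φ m : ℝ → ℝ} {K : ℝ≥0}

theorem abs_integral_mul_sub_integral_le (hφ : LipschitzWith K φ) (hm0 : ∀ u, 0 ≤ m u)
    {a b ξ : ℝ} (hm : IntervalIntegrable m volume a b) (hξa : a ≤ ξ) (hξb : ξ ≤ b) :
    |(∫ u in a..b, m u) * φ ξ - ∫ u in a..b, φ u * m u|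
      ≤ K * (b - a) * ∫ u in a..b, m u := by
  have hφm : IntervalIntegrable (fun u => φ u * m u) volume a b :=
    hm.continuousOn_mul hφ.continuous.continuousOn
  rw [← intervalIntegral.integral_mul_const, ← integral_sub (hm.mul_const _) hφm,
    ← intervalIntegral.integral_const_mul, ← Real.norm_eq_abs]
  refine norm_integral_le_of_norm_le (hξa.trans hξb) (ae_of_all _ fun u hu => ?_)
    (hm.const_mul _)
  have hdist : |φ ξ - φ u| ≤ K * (b - a) := by
    refine (hφ.dist_le_mul ξ u).trans (mul_le_mul_of_nonneg_left ?_ K.2)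
    rw [Real.dist_eq, abs_le]
    constructor <;> linarith [hu.1, hu.2]
  rw [Real.norm_eq_abs, mul_comm (m u), ← sub_mul, abs_mul, abs_of_nonneg (hm0 u)]
  exact mul_le_mul_of_nonneg_right hdist (hm0 u)

theorem abs_mul_sum_sub_integral_le (hφ : LipschitzWith K φ) (hm0 : ∀ u, 0 ≤ m u)
    {N : ℕ} {a ξ : ℕ → ℝ} {w : ℝ}
    (hm : ∀ k < N, IntervalIntegrable m volume (a k) (a (k + 1)))
    (hξ : ∀ k < N, a k ≤ ξ k ∧ ξ k ≤ a (k + 1))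
    (hw : ∀ k < N, ∫ u in a k..a (k + 1), m u = w) :
    |w * ∑ k ∈ Finset.range N, φ (ξ k) - ∫ u in a 0..a N, φ u * m u|
      ≤ K * w * (a N - a 0) := by
  have hφm : ∀ k < N, IntervalIntegrable (fun u => φ u * m u) volume (a k) (a (k + 1)) :=
    fun k hk => (hm k hk).continuousOn_mul hφ.continuous.continuousOn
  rw [← sum_integral_adjacent_intervals hφm, Finset.mul_sum, ← Finset.sum_sub_distrib,
    ← Finset.sum_range_sub, Finset.mul_sum]
  refine (Finset.abs_sum_le_sum_abs _ _).trans (Finset.sum_le_sum fun k hk => ?_)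
  rw [Finset.mem_range] at hk
  have := abs_integral_mul_sub_integral_le hφ hm0 (hm k hk) (hξ k hk).1 (hξ k hk).2
  rw [hw k hk] at this
  linarith

end Quadrature

theorem monotone_primitive_of_nonneg {m : ℝ → ℝ} (hm0 : ∀ u, 0 ≤ m u) (hm : Integrable m)
    (c : ℝ) : Monotone fun t => ∫ s in c..t, m s := fun s t hst => by
  rw [← sub_nonneg, integral_interval_sub_left hm.intervalIntegrable hm.intervalIntegrable]
  exact integral_nonneg hst fun u _ => hm0 u

theorem intervalIntegral_pos_of_ae_pos {f : ℝ → ℝ} {a b : ℝ}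
    (hfi : IntervalIntegrable f volume a b) (hpos : ∀ᵐ x, 0 < f x) (hab : a < b) :
    0 < ∫ x in a..b, f x := by
  rw [integral_pos_iff_support_of_nonneg_ae (hpos.mono fun _ hx => hx.le) hfi]
  have hsupp : (Function.support f ∩ Ioc a b : Set ℝ) =ᵐ[volume] Ioc a b := by
    rw [Filter.eventuallyEq_set]
    filter_upwards [hpos] with y hy
    simp [hy.ne']
  rw [measure_congr hsupp, Real.volume_Ioc]
  exact ⟨hab, ENNReal.ofReal_pos.mpr (sub_pos.mpr hab)⟩

theorem exists_equal_increment_points {f : ℝ → ℝ} {lo hi : ℝ} (hle : lo ≤ hi)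
    (hf : ContinuousOn f (Icc lo hi)) (hmono : f lo ≤ f hi) {N : ℕ} (hN : N ≠ 0) :
    ∃ a : ℕ → ℝ, a 0 = lo ∧ a N = hi ∧
      ∀ i ≤ N, f (a i) = f lo + i * ((f hi - f lo) / N) := by
  have hNpos : (0 : ℝ) < N := by positivity
  have hpt : ∀ i : ℕ, ∃ t, (i = 0 → t = lo) ∧ (i = N → t = hi) ∧
      (i ≤ N → f t = f lo + i * ((f hi - f lo) / N)) := by
    intro i
    rcases Nat.eq_zero_or_pos i with rfl | hi0
    · exact ⟨lo, fun _ => rfl, fun h => absurd h.symm hN, fun _ => by simp⟩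
    rcases lt_or_ge i N with hiN | hiN
    · have hval : f lo + i * ((f hi - f lo) / N) ∈ Icc (f lo) (f hi) := by
        have hd : 0 ≤ (f hi - f lo) / N := div_nonneg (sub_nonneg.mpr hmono) hNpos.le
        have hNd : (N : ℝ) * ((f hi - f lo) / N) = f hi - f lo := mul_div_cancel₀ _ hNpos.ne'
        have hiN' : (i : ℝ) ≤ N := by exact_mod_cast hiN.le
        constructor <;>
          linarith [mul_le_mul_of_nonneg_right hiN' hd, mul_nonneg i.cast_nonneg hd]
      obtain ⟨t, -, ht⟩ := intermediate_value_Icc hle hf hval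
      exact ⟨t, fun h => by omega, fun h => by omega, fun _ => ht⟩
    · refine ⟨hi, fun h => by omega, fun _ => rfl, fun h => ?_⟩
      rw [le_antisymm h hiN]
      field_simp
      ring
  choose a ha0 haN ha using hpt
  exact ⟨a, ha0 0 rfl, haN N rfl, ha⟩

theorem exists_cells_of_quantiles {m : ℝ → ℝ} (hm0 : ∀ y, 0 ≤ m y) (hmint : Integrable m)
    {lo hi M : ℝ} (hle : lo ≤ hi) (hM : M = ∫ t in lo..hi, m t) (hMpos : 0 < M)
    {N : ℕ} (hN : N ≠ 0) {x : ℕ → ℝ}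
    (hquant : ∀ i ∈ Finset.Icc 1 N,
      ∫ t in lo..(x i), m t = M / (2 * N) + ((i : ℝ) - 1) * M / N) :
    ∃ a : ℕ → ℝ, a 0 = lo ∧ a N = hi ∧
      (∀ k < N, a k ≤ x (k + 1) ∧ x (k + 1) ≤ a (k + 1)) ∧
      ∀ k < N, ∫ u in a k..a (k + 1), m u = M / N := by
  have hFmono : Monotone fun t => ∫ s in lo..t, m s := monotone_primitive_of_nonneg hm0 hmint lo
  obtain ⟨a, ha0, haN, haF⟩ := exists_equal_increment_points hle
    (hmint.continuous_primitive lo).continuousOn (hFmono hle) hN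
  simp only [integral_same, zero_add, sub_zero, ← hM] at haF
  have hw : 0 < M / N := by positivity
  refine ⟨a, ha0, haN, fun k hk => ?_, fun k hk => ?_⟩
  · have hxk : ∫ t in lo..x (k + 1), m t = k * (M / N) + M / N / 2 := by
      rw [hquant (k + 1) (Finset.mem_Icc.mpr ⟨by omega, hk⟩)]
      push_cast
      ring
    have hak := haF k hk.le
    have hak1 := haF (k + 1) hk
    push_cast at hak1
    constructor <;> refine (hFmono.reflect_lt ?_).le <;> simp only [hak, hak1, hxk] <;> linarith
  · rw [← integral_interval_sub_left hmint.intervalIntegrable hmint.intervalIntegrable,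
      haF _ hk, haF _ hk.le]
    push_cast
    ring

theorem stmt_14_general (m : ℝ → ℝ) (hm0 : ∀ y, 0 ≤ m y) (hmint : Integrable m)
    (hmpos : ∀ᵐ y ∂volume, 0 < m y)
    (R : ℝ) (hR : 0 < R) (MR : ℝ) (hMR : MR = ∫ t in (-R)..R, m t)
    (N : ℕ) (hN : 1 ≤ N) (x : ℕ → ℝ)
    (hquant : ∀ i ∈ Finset.Icc 1 N,
      ∫ t in (-R)..(x i), m t = MR / (2 * N) + ((i : ℝ) - 1) * MR / N)
    (φ : ℝ → ℝ) (L C : ℝ) (hL : 0 ≤ L)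
    (hLip : ∀ a b : ℝ, |φ a - φ b| ≤ L * |a - b|)
    (hC : ∀ a : ℝ, |φ a| ≤ C) :
    |MR * ((1 / (N : ℝ)) * ∑ i ∈ Finset.Icc 1 N, φ (x i))
        - ∫ y in Set.Ioo (-R) R, φ y * m y|
      ≤ (2 * MR / N) * (C + R * L) := by
  have hMRpos : 0 < MR :=
    hMR ▸ intervalIntegral_pos_of_ae_pos hmint.intervalIntegrable hmpos (by linarith)
  obtain ⟨a, ha0, haN, hx, hcell⟩ :=
    exists_cells_of_quantiles hm0 hmint (by linarith) hMR hMRpos (by omega) hquant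
  have hquad := abs_mul_sum_sub_integral_le (LipschitzWith.of_dist_le' hLip) hm0
    (fun k _ => hmint.intervalIntegrable) hx hcell
  rw [ha0, haN, Real.coe_toNNReal L hL] at hquad
  have hsum : MR * ((1 / (N : ℝ)) * ∑ i ∈ Finset.Icc 1 N, φ (x i))
      = MR / N * ∑ k ∈ Finset.range N, φ (x (k + 1)) := by
    rw [← Finset.Ico_add_one_right_eq_Icc, Finset.sum_Ico_eq_sum_range, add_tsub_cancel_right]
    simp only [add_comm 1]
    ring
  have hC0 : 0 ≤ C := (abs_nonneg _).trans (hC 0)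
  rw [hsum, ← integral_Ioc_eq_integral_Ioo, ← integral_of_le (by linarith)]
  calc _ ≤ L * (MR / N) * (R - -R) := hquad
    _ = 2 * MR / N * (R * L) := by ring
    _ ≤ 2 * MR / N * (C + R * L) := by gcongr; linarith

theorem stmt_14 (m : ℝ → ℝ) (hm0 : ∀ y, 0 ≤ m y) (hmint : Integrable m)
    (hmprob : ∫ y, m y = 1) (hmpos : ∀ᵐ y ∂volume, 0 < m y)
    (R : ℝ) (hR : 0 < R) (MR : ℝ) (hMR : MR = ∫ t in (-R)..R, m t)
    (N : ℕ) (hN : 1 ≤ N) (x : ℕ → ℝ)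
    (hquant : ∀ i ∈ Finset.Icc 1 N,
      ∫ t in (-R)..(x i), m t = MR / (2 * N) + ((i : ℝ) - 1) * MR / N)
    (φ : ℝ → ℝ) (L C : ℝ) (hL : 0 ≤ L)
    (hLip : ∀ a b : ℝ, |φ a - φ b| ≤ L * |a - b|)
    (hC : ∀ a : ℝ, |φ a| ≤ C) :
    |MR * ((1 / (N : ℝ)) * ∑ i ∈ Finset.Icc 1 N, φ (x i))
        - ∫ y in Set.Ioo (-R) R, φ y * m y|
      ≤ (2 * MR / N) * (C + R * L) :=
  stmt_14_general m hm0 hmint hmpos R hR MR hMR N hN x hquant φ L C hL hLip hC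
end

section
/- Let x^i, y^i ∈ ℝ for i,j with |x^i - x^j| ≥ δ for all i ≠ j, and set x̂^j := x^j - (δ/8)(x^j - x^i)/|x^j - x^i| for j ≠ i. Then: (a) for all y ∈ B_{δ/8}(x̂^j), |y - x^i| ≤ |x^j - x^i|; (b) the balls B_{δ/8}(x̂^j), j ≠ i, are pairwise disjoint; (c) if additionally x^j ∈ B_r(x^i) with r ≥ δ then B_{δ/8}(x̂^j) ⊂ B_r(x^i). -/
/-!
Moving `a` a distance `t ≤ dist a b` straight towards `b` gives a point `p` with `dist p a = t`
and `dist p b = dist a b - t`. Hence the ball of radius `t` about `p` lies in the ball about `b`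
through `a`, and the triangle inequality keeps two such balls apart as soon as their centres
started at distance at least `4 t`; with `t = δ / 8` this is the case for points `δ` apart.
-/

open Metric

section ShiftToward

variable {E : Type*} [NormedAddCommGroup E] {a b : E} {t : ℝ}

lemma eq_zero_of_norm_sub_eq_zero (ht₀ : 0 ≤ t) (ht : t ≤ dist a b) :
    ‖a - b‖ = 0 → t = 0 := fun h => by
  rw [dist_eq_norm, h] at ht
  exact le_antisymm ht ht₀

variable [NormedSpace ℝ E]

noncomputable def shiftToward (a b : E) (t : ℝ) : E :=
  a - t • (‖a - b‖⁻¹ • (a - b))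

lemma shiftToward_eq (a b : E) (t : ℝ) :
    shiftToward a b t = a - (t / ‖a - b‖) • (a - b) := by
  rw [shiftToward, smul_smul, div_eq_mul_inv]

lemma dist_shiftToward_left (ht₀ : 0 ≤ t) (ht : t ≤ dist a b) :
    dist (shiftToward a b t) a = t := by
  rw [shiftToward_eq, dist_eq_norm, sub_sub_cancel_left, norm_neg, norm_smul, Real.norm_eq_abs,
    abs_of_nonneg (by positivity), div_mul_cancel_of_imp (eq_zero_of_norm_sub_eq_zero ht₀ ht)]

lemma dist_shiftToward_right (ht₀ : 0 ≤ t) (ht : t ≤ dist a b) :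
    dist (shiftToward a b t) b = dist a b - t := by
  have hfrac : t / ‖a - b‖ ≤ 1 := div_le_one_of_le₀ (by rwa [← dist_eq_norm]) (norm_nonneg _)
  have hsub : shiftToward a b t - b = (1 - t / ‖a - b‖) • (a - b) := by
    rw [shiftToward_eq, sub_smul, one_smul]
    abel
  rw [dist_eq_norm, hsub, norm_smul, Real.norm_eq_abs, abs_of_nonneg (by linarith), sub_mul,
    one_mul, div_mul_cancel_of_imp (eq_zero_of_norm_sub_eq_zero ht₀ ht), dist_eq_norm]

lemma ball_shiftToward_subset_ball (ht₀ : 0 ≤ t) (ht : t ≤ dist a b) :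
    ball (shiftToward a b t) t ⊆ ball b (dist a b) :=
  ball_subset_ball' (by rw [dist_shiftToward_right ht₀ ht]; linarith)

end ShiftToward

lemma Metric.disjoint_ball_ball_of_four_mul_le_dist {X : Type*} [PseudoMetricSpace X]
    {a c p q : X} {t : ℝ} (hp : dist p a ≤ t) (hq : dist q c ≤ t) (hac : 4 * t ≤ dist a c) :
    Disjoint (ball p t) (ball q t) := by
  apply ball_disjoint_ball
  have := dist_triangle4 a p q c
  rw [dist_comm a p] at this
  linarith

theorem stmt_17_general (d : ℕ) (δ : ℝ) (hδ : 0 < δ)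
    {ι : Type*} (x : ι → EuclideanSpace ℝ (Fin d)) (i : ι)
    (hdist : ∀ j k : ι, j ≠ k → δ ≤ ‖x j - x k‖)
    (xh : ι → EuclideanSpace ℝ (Fin d))
    (hxh : ∀ j : ι, j ≠ i →
      xh j = x j - (δ / 8) • (‖x j - x i‖⁻¹ • (x j - x i))) :
    (∀ j : ι, j ≠ i → ∀ y ∈ Metric.ball (xh j) (δ / 8), ‖y - x i‖ ≤ ‖x j - x i‖) ∧
    (∀ j k : ι, j ≠ i → k ≠ i → j ≠ k →
      Disjoint (Metric.ball (xh j) (δ / 8)) (Metric.ball (xh k) (δ / 8))) ∧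
    (∀ j : ι, j ≠ i → ∀ r : ℝ, δ ≤ r → x j ∈ Metric.ball (x i) r →
      Metric.ball (xh j) (δ / 8) ⊆ Metric.ball (x i) r) := by
  have hshift : ∀ j, j ≠ i → xh j = shiftToward (x j) (x i) (δ / 8) := hxh
  have ht₀ : 0 ≤ δ / 8 := by positivity
  have ht : ∀ j, j ≠ i → δ / 8 ≤ dist (x j) (x i) := fun j hj => by
    rw [dist_eq_norm]
    linarith [hdist j i hj]
  have hsub : ∀ j, j ≠ i → ball (xh j) (δ / 8) ⊆ ball (x i) (dist (x j) (x i)) := fun j hj => by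
    rw [hshift j hj]
    exact ball_shiftToward_subset_ball ht₀ (ht j hj)
  refine ⟨fun j hj y hy => ?_, fun j k hj hk hjk => ?_, fun j hj r _ hr => ?_⟩
  · have hy' := hsub j hj hy
    rw [mem_ball, dist_eq_norm, dist_eq_norm] at hy'
    exact hy'.le
  · rw [hshift j hj, hshift k hk]
    refine disjoint_ball_ball_of_four_mul_le_dist (dist_shiftToward_left ht₀ (ht j hj)).le
      (dist_shiftToward_left ht₀ (ht k hk)).le ?_
    rw [dist_eq_norm]
    linarith [hdist j k hjk]
  · exact (hsub j hj).trans (ball_subset_ball (mem_ball.mp hr).le)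

theorem stmt_17 (d : ℕ) (hd : 1 ≤ d) (δ : ℝ) (hδ : 0 < δ)
    {ι : Type*} (x : ι → EuclideanSpace ℝ (Fin d)) (i : ι)
    (hdist : ∀ j k : ι, j ≠ k → δ ≤ ‖x j - x k‖)
    (xh : ι → EuclideanSpace ℝ (Fin d))
    (hxh : ∀ j : ι, j ≠ i →
      xh j = x j - (δ / 8) • (‖x j - x i‖⁻¹ • (x j - x i))) :
    (∀ j : ι, j ≠ i → ∀ y ∈ Metric.ball (xh j) (δ / 8), ‖y - x i‖ ≤ ‖x j - x i‖) ∧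
    (∀ j k : ι, j ≠ i → k ≠ i → j ≠ k →
      Disjoint (Metric.ball (xh j) (δ / 8)) (Metric.ball (xh k) (δ / 8))) ∧
    (∀ j : ι, j ≠ i → ∀ r : ℝ, δ ≤ r → x j ∈ Metric.ball (x i) r →
      Metric.ball (xh j) (δ / 8) ⊆ Metric.ball (x i) r) :=
  stmt_17_general d δ hδ x i hdist xh hxh
end
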